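/- arXiv:2501.17619 — 4 statements merged into one kernel-verified Lean document; each statement's English description precedes it below -/
import Mathlib

section
/- Define the squarefull part of a nonzero integer $a$ to be $\mathrm{sqfull}(a) = \prod_{p \mid a,\ v_p(a) \geq 2} p^{v_p(a)}$. Then for all real $B, Y \geq 1$, the number of nonzero integers $a$ with $|a| \leq B$ and $\mathrm{sqfull}(a) > Y$ is $O(B / Y^{1/2})$ with an absolute implied constant. -/
open scoped Classical


def sqfull (a : ℤ) : ℕ :=
  ∏ p ∈ a.natAbs.primeFactors.filter (fun p => 2 ≤ a.natAbs.factorization p),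
    p ^ a.natAbs.factorization p

noncomputable def sqS (a : ℤ) : Finset ℕ :=
  a.natAbs.primeFactors.filter (fun p => 2 ≤ a.natAbs.factorization p)

noncomputable def bf (a : ℤ) : ℕ :=
  ∏ p ∈ sqS a, p ^ (a.natAbs.factorization p / 2 - a.natAbs.factorization p % 2)

noncomputable def cf (a : ℤ) : ℕ :=
  ∏ p ∈ sqS a, p ^ (a.natAbs.factorization p % 2)

lemma bf_cf_eq (a : ℤ) : (bf a) ^ 2 * (cf a) ^ 3 = sqfull a := by
  rw [bf, cf, sqfull, ← Finset.prod_pow, ← Finset.prod_pow, ← Finset.prod_mul_distrib]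
  apply Finset.prod_congr rfl
  intro p hp
  rw [sqS, Finset.mem_filter] at hp
  obtain ⟨-, h2⟩ := hp
  rw [← pow_mul, ← pow_mul, ← pow_add]
  congr 1
  omega

lemma bf_pos (a : ℤ) : 0 < bf a := by
  apply Finset.prod_pos
  intro p hp
  exact pow_pos (Nat.prime_of_mem_primeFactors (Finset.mem_filter.mp hp).1).pos _

lemma cf_pos (a : ℤ) : 0 < cf a := by
  apply Finset.prod_pos
  intro p hp
  exact pow_pos (Nat.prime_of_mem_primeFactors (Finset.mem_filter.mp hp).1).pos _

lemma sqfull_dvd (a : ℤ) (ha : a ≠ 0) : (sqfull a : ℤ) ∣ a := by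
  have h1 : sqfull a ∣ a.natAbs := by
    have : ∏ p ∈ a.natAbs.primeFactors, p ^ a.natAbs.factorization p = a.natAbs := by
      have := Nat.factorization_prod_pow_eq_self (n := a.natAbs) (by simpa using ha)
      simpa [Nat.factorization, Finsupp.prod] using this
    rw [← this, sqfull]
    exact Finset.prod_dvd_prod_of_subset _ _ _ (Finset.filter_subset _ _)
  exact (Int.natCast_dvd_natCast.mpr h1).trans Int.natAbs_dvd_self

-- sum of 1/b^2 over a finset whose elements are all ≥ x ≥ 1 is ≤ 2/x
lemma sum_inv_sq_le (S : Finset ℕ) (x : ℝ) (hx : 1 ≤ x)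
    (hS : ∀ b ∈ S, x ≤ (b : ℝ)) : ∑ b ∈ S, ((b : ℝ) ^ 2)⁻¹ ≤ 2 / x := by
  have hk1 : 1 ≤ ⌈x⌉₊ := Nat.one_le_ceil_iff.mpr (by linarith)
  set k := ⌈x⌉₊ - 1 with hk
  have hsub : S ⊆ Finset.Ioo k (S.sup id + 1) := by
    intro b hb
    have hxb := hS b hb
    have : ⌈x⌉₊ ≤ b := Nat.ceil_le.mpr hxb
    refine Finset.mem_Ioo.mpr ⟨by omega, ?_⟩
    have : b ≤ S.sup id := Finset.le_sup (f := id) hb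
    omega
  calc ∑ b ∈ S, ((b : ℝ) ^ 2)⁻¹
      ≤ ∑ b ∈ Finset.Ioo k (S.sup id + 1), ((b : ℝ) ^ 2)⁻¹ := by
        apply Finset.sum_le_sum_of_subset_of_nonneg hsub
        intro i _ _; positivity
    _ ≤ 2 / ((k : ℝ) + 1) := sum_Ioo_inv_sq_le k _
    _ ≤ 2 / x := by
        have hkx : x ≤ (k : ℝ) + 1 := by
          have : ((k : ℝ) + 1) = (⌈x⌉₊ : ℝ) := by
            have : k + 1 = ⌈x⌉₊ := by omega
            exact_mod_cast congrArg (Nat.cast : ℕ → ℝ) this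
          rw [this]
          exact Nat.le_ceil x
        apply div_le_div_of_nonneg_left (by norm_num) (by linarith) hkx

-- K := tsum of 1/sqrt(c^3)
noncomputable def Kc : ℝ := ∑' c : ℕ, (Real.sqrt ((c : ℝ) ^ 3))⁻¹

lemma summable_inv_sqrt_cube : Summable (fun c : ℕ => (Real.sqrt ((c : ℝ) ^ 3))⁻¹) := by
  have h : Summable (fun c : ℕ => ((c : ℝ) ^ ((3 : ℝ) / 2))⁻¹) := by
    simpa [one_div] using Real.summable_one_div_nat_rpow.mpr (by norm_num : (1:ℝ) < 3/2)
  apply h.congr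
  intro c
  congr 1
  rw [Real.sqrt_eq_rpow, ← Real.rpow_natCast (c : ℝ) 3, ← Real.rpow_mul (by positivity)]
  norm_num

lemma sum_le_Kc (T : Finset ℕ) : ∑ c ∈ T, (Real.sqrt ((c : ℝ) ^ 3))⁻¹ ≤ Kc :=
  Summable.sum_le_tsum T (fun c _ => by positivity) summable_inv_sqrt_cube

lemma Kc_pos : 0 < Kc := by
  have := sum_le_Kc {1}
  simp at this
  linarith

lemma card_mult (n d : ℕ) (hd : 0 < d) :
    (((Finset.Icc (-(n:ℤ)) n).filter (fun a => a ≠ 0 ∧ (d:ℤ) ∣ a)).card : ℝ)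
      ≤ 2 * n / d := by
  set m : ℤ := (n : ℤ) / d with hm
  have hd' : (0:ℤ) < d := by exact_mod_cast hd
  have hm0 : 0 ≤ m := Int.ediv_nonneg (by positivity) hd'.le
  have hsub : ∀ a ∈ (Finset.Icc (-(n:ℤ)) n).filter (fun a => a ≠ 0 ∧ (d:ℤ) ∣ a),
      a / d ∈ (Finset.Icc (-m) m).erase 0 := by
    intro a ha
    rw [Finset.mem_filter, Finset.mem_Icc] at ha
    obtain ⟨⟨h1, h2⟩, h3, h4⟩ := ha
    have heq : (d:ℤ) * (a / d) = a := Int.mul_ediv_cancel' h4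
    refine Finset.mem_erase.mpr ⟨?_, Finset.mem_Icc.mpr ⟨?_, ?_⟩⟩
    · intro h0; apply h3; rw [← heq, h0, mul_zero]
    · rw [neg_le] at *
      rw [hm, Int.le_ediv_iff_mul_le hd']
      nlinarith [heq]
    · rw [hm, Int.le_ediv_iff_mul_le hd']
      nlinarith [abs_le.mpr ⟨h1, h2⟩, le_abs_self (a/d), neg_abs_le (a/d), heq]
  have hinj : Set.InjOn (fun a : ℤ => a / d)
      ↑((Finset.Icc (-(n:ℤ)) n).filter (fun a => a ≠ 0 ∧ (d:ℤ) ∣ a)) := by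
    intro a ha b hb hab
    simp only [Finset.coe_filter, Set.mem_setOf_eq] at ha hb
    have ha' : (d:ℤ) * (a / d) = a := Int.mul_ediv_cancel' ha.2.2
    have hb' : (d:ℤ) * (b / d) = b := Int.mul_ediv_cancel' hb.2.2
    simp only at hab
    rw [← ha', ← hb', hab]
  have hcard := Finset.card_le_card_of_injOn _ hsub hinj
  have hce : ((Finset.Icc (-m) m).erase 0).card = 2 * m.toNat := by
    rw [Finset.card_erase_of_mem (Finset.mem_Icc.mpr ⟨by omega, hm0⟩), Int.card_Icc]
    omega
  have hmn : (m : ℝ) ≤ (n : ℝ) / d := by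
    rw [le_div_iff₀ (by positivity)]
    have : m * d ≤ n := Int.ediv_mul_le _ (by omega)
    exact_mod_cast this
  have h2 : ((Finset.Icc (-(n:ℤ)) n).filter (fun a => a ≠ 0 ∧ (d:ℤ) ∣ a)).card ≤ 2 * m.toNat := by
    rw [← hce]; exact hcard
  have h3 : (((Finset.Icc (-(n:ℤ)) n).filter (fun a => a ≠ 0 ∧ (d:ℤ) ∣ a)).card : ℝ)
      ≤ 2 * (m.toNat : ℝ) := by exact_mod_cast h2
  have h4 : (m.toNat : ℝ) = (m : ℝ) := by exact_mod_cast Int.toNat_of_nonneg hm0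
  rw [mul_div_assoc]
  rw [h4] at h3
  linarith
lemma sqfull_dvd_natAbs (a : ℤ) : sqfull a ∣ a.natAbs := by
  rcases eq_or_ne a 0 with rfl | ha
  · simp
  have : ∏ p ∈ a.natAbs.primeFactors, p ^ a.natAbs.factorization p = a.natAbs := by
    have := Nat.factorization_prod_pow_eq_self (n := a.natAbs) (by simpa using ha)
    simpa [Nat.factorization, Finsupp.prod] using this
  rw [← this, sqfull]
  exact Finset.prod_dvd_prod_of_subset _ _ _ (Finset.filter_subset _ _)

/-- For all real `B, Y ≥ 1`, the number of nonzero integers `a` with `|a| ≤ B` and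
squarefull part exceeding `Y` is `O(B / √Y)` with an absolute implied constant. -/
theorem stmt_1 :
    ∃ C : ℝ, 0 < C ∧ ∀ B Y : ℝ, 1 ≤ B → 1 ≤ Y →
      (Nat.card {a : ℤ | a ≠ 0 ∧ (|a| : ℝ) ≤ B ∧ Y < (sqfull a : ℝ)} : ℝ) ≤
        C * B / Real.sqrt Y := by
  refine ⟨4 * Kc, by have := Kc_pos; linarith, ?_⟩
  intro B Y hB hY
  have hB0 : (0:ℝ) ≤ B := by linarith
  have hY0 : (0:ℝ) < Y := by linarith
  have hsY : 0 < Real.sqrt Y := Real.sqrt_pos.mpr hY0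
  set n : ℕ := ⌊B⌋₊ with hn
  have hnB : (n : ℝ) ≤ B := Nat.floor_le hB0
  set A' : Finset ℤ :=
    (Finset.Icc (-(n:ℤ)) n).filter (fun a => a ≠ 0 ∧ Y < (sqfull a : ℝ)) with hA'
  -- Step A : identify the set with A'
  have hset : {a : ℤ | a ≠ 0 ∧ (|a| : ℝ) ≤ B ∧ Y < (sqfull a : ℝ)} = ↑A' := by
    ext a
    simp only [Set.mem_setOf_eq, hA', Finset.coe_filter, Finset.mem_Icc, Set.mem_setOf_eq]
    constructor
    · rintro ⟨h0, h1, h2⟩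
      have habs : (a.natAbs : ℝ) ≤ B := by
        rw [Nat.cast_natAbs, Int.cast_abs]; exact h1
      have : a.natAbs ≤ n := Nat.le_floor habs
      exact ⟨⟨by omega, by omega⟩, h0, h2⟩
    · rintro ⟨⟨h1, h2⟩, h0, h3⟩
      refine ⟨h0, ?_, h3⟩
      have : a.natAbs ≤ n := by omega
      have : (a.natAbs : ℝ) ≤ n := by exact_mod_cast this
      have heq : |(a:ℝ)| = (a.natAbs : ℝ) := by rw [Nat.cast_natAbs, Int.cast_abs]
      rw [heq]
      linarith
  rw [hset, Nat.card_coe_set_eq, Set.ncard_coe_finset]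
  -- Step B : cover A' by multiples
  set F : Finset (ℕ × ℕ) :=
    ((Finset.Icc 1 n) ×ˢ (Finset.Icc 1 n)).filter
      (fun q => Y < ((q.2 ^ 2 * q.1 ^ 3 : ℕ) : ℝ)) with hF
  set M : ℕ × ℕ → Finset ℤ := fun q =>
    (Finset.Icc (-(n:ℤ)) n).filter (fun a => a ≠ 0 ∧ ((q.2 ^ 2 * q.1 ^ 3 : ℕ) : ℤ) ∣ a)
    with hM
  have hsub : A' ⊆ F.biUnion M := by
    intro a ha
    rw [hA', Finset.mem_filter, Finset.mem_Icc] at ha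
    obtain ⟨⟨h1, h2⟩, h0, hYa⟩ := ha
    set b := bf a with hb
    set c := cf a with hc
    have hb1 : 1 ≤ b := bf_pos a
    have hc1 : 1 ≤ c := cf_pos a
    have hbc : b ^ 2 * c ^ 3 = sqfull a := bf_cf_eq a
    have hdvd : sqfull a ∣ a.natAbs := sqfull_dvd_natAbs a
    have hna : 0 < a.natAbs := Int.natAbs_pos.mpr h0
    have hsn : sqfull a ≤ a.natAbs := Nat.le_of_dvd hna hdvd
    have han : a.natAbs ≤ n := by omega
    have hbb : b ≤ b ^ 2 * c ^ 3 :=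
      le_trans (Nat.le_self_pow two_ne_zero b) (Nat.le_mul_of_pos_right _ (pow_pos hc1 3))
    have hcc : c ≤ b ^ 2 * c ^ 3 :=
      le_trans (Nat.le_self_pow three_ne_zero c) (Nat.le_mul_of_pos_left _ (pow_pos hb1 2))
    have hbn : b ≤ n := by omega
    have hcn : c ≤ n := by omega
    rw [Finset.mem_biUnion]
    refine ⟨(c, b), ?_, ?_⟩
    · rw [hF, Finset.mem_filter, Finset.mem_product, Finset.mem_Icc, Finset.mem_Icc]
      exact ⟨⟨⟨hc1, hcn⟩, ⟨hb1, hbn⟩⟩, by rw [hbc]; exact hYa⟩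
    · rw [hM]
      simp only [Finset.mem_filter, Finset.mem_Icc]
      refine ⟨⟨h1, h2⟩, h0, ?_⟩
      rw [hbc]
      exact sqfull_dvd a h0
  have hcard : A'.card ≤ ∑ q ∈ F, (M q).card :=
    (Finset.card_le_card hsub).trans (Finset.card_biUnion_le)
  -- Step C : bound each M q
  have hMq : ∀ q ∈ F, ((M q).card : ℝ) ≤ 2 * B * (((q.2 ^ 2 * q.1 ^ 3 : ℕ) : ℝ))⁻¹ := by
    intro q hq
    rw [hF, Finset.mem_filter, Finset.mem_product, Finset.mem_Icc, Finset.mem_Icc] at hq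
    have hd : 0 < q.2 ^ 2 * q.1 ^ 3 :=
      Nat.mul_pos (pow_pos hq.1.2.1 _) (pow_pos hq.1.1.1 _)
    have := card_mult n (q.2 ^ 2 * q.1 ^ 3) hd
    rw [hM]
    refine this.trans ?_
    rw [mul_div_assoc, div_eq_mul_inv]
    have hdR : (0:ℝ) < ((q.2 ^ 2 * q.1 ^ 3 : ℕ) : ℝ) := by exact_mod_cast hd
    have : (0:ℝ) ≤ (((q.2 ^ 2 * q.1 ^ 3 : ℕ) : ℝ))⁻¹ := by positivity
    nlinarith
  -- Step E : the analytic sum bound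
  have hsum : ∑ q ∈ F, (((q.2 ^ 2 * q.1 ^ 3 : ℕ) : ℝ))⁻¹ ≤ 2 * Kc / Real.sqrt Y := by
    rw [hF, Finset.sum_filter, Finset.sum_product]
    have hinner : ∀ c ∈ Finset.Icc 1 n,
        (∑ b ∈ Finset.Icc 1 n,
          if Y < (((c, b).2 ^ 2 * (c, b).1 ^ 3 : ℕ) : ℝ) then
            ((((c, b).2 ^ 2 * (c, b).1 ^ 3 : ℕ) : ℝ))⁻¹ else 0)
          ≤ 2 / (Real.sqrt ((c:ℝ)^3) * Real.sqrt Y) := by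
      intro c hcmem
      rw [Finset.mem_Icc] at hcmem
      have hc1 : 1 ≤ c := hcmem.1
      have hcR : (1:ℝ) ≤ (c:ℝ) := by exact_mod_cast hc1
      set u : ℝ := Real.sqrt ((c:ℝ)^3) with hu
      have hu0 : 0 < u := Real.sqrt_pos.mpr (by positivity)
      have hu2 : u ^ 2 = (c:ℝ)^3 := Real.sq_sqrt (by positivity)
      set Bc : Finset ℕ := (Finset.Icc 1 n).filter
        (fun b => Y < (((b : ℕ) ^ 2 * (c:ℕ) ^ 3 : ℕ) : ℝ)) with hBc
      rw [← Finset.sum_filter]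
      set x : ℝ := max 1 (Real.sqrt Y / u) with hx
      have hx1 : 1 ≤ x := le_max_left _ _
      have hbx : ∀ b ∈ Bc, x ≤ (b : ℝ) := by
        intro b hbmem
        rw [hBc, Finset.mem_filter, Finset.mem_Icc] at hbmem
        obtain ⟨⟨hb1, -⟩, hbY⟩ := hbmem
        have hbR : (1:ℝ) ≤ (b:ℝ) := by exact_mod_cast hb1
        have hYb : Y ≤ (b:ℝ)^2 * (c:ℝ)^3 := by
          push_cast at hbY
          linarith
        have : Real.sqrt Y ≤ Real.sqrt ((b:ℝ)^2 * (c:ℝ)^3) := Real.sqrt_le_sqrt hYb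
        rw [Real.sqrt_mul (by positivity), Real.sqrt_sq (by positivity)] at this
        have : Real.sqrt Y / u ≤ (b:ℝ) := by
          rw [div_le_iff₀ hu0]
          exact this
        exact max_le hbR this
      have hsmall : ∑ b ∈ Bc, (((b ^ 2 * c ^ 3 : ℕ)) : ℝ)⁻¹
          = ((c:ℝ)^3)⁻¹ * ∑ b ∈ Bc, ((b:ℝ)^2)⁻¹ := by
        rw [Finset.mul_sum]
        apply Finset.sum_congr rfl
        intro b _
        push_cast
        rw [mul_inv]
        ring
      calc ∑ b ∈ Bc, (((b ^ 2 * c ^ 3 : ℕ)) : ℝ)⁻¹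
          = ((c:ℝ)^3)⁻¹ * ∑ b ∈ Bc, ((b:ℝ)^2)⁻¹ := hsmall
        _ ≤ ((c:ℝ)^3)⁻¹ * (2 / x) := by
            apply mul_le_mul_of_nonneg_left (sum_inv_sq_le Bc x hx1 hbx) (by positivity)
        _ ≤ 2 / (u * Real.sqrt Y) := by
            rcases max_cases 1 (Real.sqrt Y / u) with ⟨hxe, hge⟩ | ⟨hxe, hlt⟩
            · -- x = 1, so sqrt Y ≤ u
              have hsu : Real.sqrt Y ≤ u := (div_le_one hu0).mp hge
              have e1 : ((c:ℝ)^3)⁻¹ * (2/1) = 2/(u*u) := by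
                rw [← hu2, div_one, pow_two, mul_inv]; ring
              rw [hx, hxe, e1]
              exact div_le_div_of_nonneg_left (by norm_num) (by positivity) (by nlinarith)
            · -- x = sqrt Y / u
              have e2 : ((c:ℝ)^3)⁻¹ * (2/(Real.sqrt Y / u)) = 2/(u * Real.sqrt Y) := by
                rw [← hu2]
                field_simp
              rw [hx, hxe, e2]
      done
    calc (∑ c ∈ Finset.Icc 1 n, ∑ b ∈ Finset.Icc 1 n,
          if Y < (((c, b).2 ^ 2 * (c, b).1 ^ 3 : ℕ) : ℝ) then
            ((((c, b).2 ^ 2 * (c, b).1 ^ 3 : ℕ) : ℝ))⁻¹ else 0)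
        ≤ ∑ c ∈ Finset.Icc 1 n, 2 / (Real.sqrt ((c:ℝ)^3) * Real.sqrt Y) :=
          Finset.sum_le_sum hinner
      _ = (2 / Real.sqrt Y) * ∑ c ∈ Finset.Icc 1 n, (Real.sqrt ((c:ℝ)^3))⁻¹ := by
          rw [Finset.mul_sum]
          apply Finset.sum_congr rfl
          intro c _
          rw [div_eq_mul_inv, mul_inv, div_eq_mul_inv]
          ring
      _ ≤ (2 / Real.sqrt Y) * Kc := by
          apply mul_le_mul_of_nonneg_left (sum_le_Kc _) (by positivity)
      _ = 2 * Kc / Real.sqrt Y := by ring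
  -- Final assembly
  have hKc := Kc_pos
  calc (A'.card : ℝ)
      ≤ ∑ q ∈ F, ((M q).card : ℝ) := by exact_mod_cast hcard
    _ ≤ ∑ q ∈ F, 2 * B * (((q.2 ^ 2 * q.1 ^ 3 : ℕ) : ℝ))⁻¹ := Finset.sum_le_sum hMq
    _ = 2 * B * ∑ q ∈ F, (((q.2 ^ 2 * q.1 ^ 3 : ℕ) : ℝ))⁻¹ := by rw [Finset.mul_sum]
    _ ≤ 2 * B * (2 * Kc / Real.sqrt Y) := by
        apply mul_le_mul_of_nonneg_left hsum (by positivity)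
    _ = 4 * Kc * B / Real.sqrt Y := by ring
end

section
/- Let $a \geq 1$ be an integer. Then $\sum_{1 \leq d \leq X} \mu(d)^2 a^{\omega(d)} \ll_a X (\log X)^{a-1}$ uniformly for $X > 2$, where $\omega(d)$ is the number of distinct prime divisors of $d$ and $\mu$ is the Möbius function. -/
open ArithmeticFunction Finset

private lemma musq (n : ℕ) : ((moebius n : ℤ) : ℝ)^2 = if Squarefree n then 1 else 0 := by
  by_cases h : Squarefree n
  · rw [if_pos h, moebius_apply_of_squarefree h]
    push_cast
    rw [← pow_mul, mul_comm, pow_mul]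
    norm_num
  · rw [if_neg h, moebius_eq_zero_of_not_squarefree h]; norm_num

private lemma musq_le_one (n : ℕ) : ((moebius n : ℤ) : ℝ)^2 ≤ 1 := by
  rw [musq]; split_ifs <;> norm_num

private lemma divisor_identity (c : ℕ) {e : ℕ} (he : e ≠ 0) :
    ∑ f ∈ e.divisors, ((moebius f : ℤ) : ℝ)^2 * (c:ℝ)^(f.primeFactors.card)
      = ((c:ℝ)+1)^(e.primeFactors.card) := by
  have h1 : ∑ f ∈ e.divisors, ((moebius f : ℤ) : ℝ)^2 * (c:ℝ)^(f.primeFactors.card)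
      = ∑ f ∈ e.divisors with Squarefree f, (c:ℝ)^(f.primeFactors.card) := by
    rw [Finset.sum_filter]
    refine Finset.sum_congr rfl fun f _ => ?_
    rw [musq]
    split_ifs <;> simp
  rw [h1, Nat.sum_divisors_filter_squarefree he]
  have hFin : (UniqueFactorizationMonoid.normalizedFactors e).toFinset = e.primeFactors := by
    rw [Nat.factors_eq]
    simp
  rw [hFin]
  have h2 := Finset.prod_add (fun _ : ℕ => (c:ℝ)) (fun _ => (1:ℝ)) e.primeFactors
  simp only [Finset.prod_const, Finset.prod_const_one, one_pow, mul_one] at h2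
  rw [h2]
  refine Finset.sum_congr rfl fun t ht => ?_
  rw [Finset.mem_powerset] at ht
  have hp : ∀ p ∈ t, p.Prime := fun p hpt => Nat.prime_of_mem_primeFactors (ht hpt)
  have hv : (t.val.prod) = ∏ p ∈ t, p := by
    rw [Finset.prod_val]; rfl
  rw [hv, Nat.primeFactors_prod hp]

private lemma swap_sum (N : ℕ) (F : ℕ → ℕ → ℝ) :
    ∑ e ∈ Finset.Icc 1 N, ∑ f ∈ e.divisors, F f (e / f)
      = ∑ f ∈ Finset.Icc 1 N, ∑ m ∈ Finset.Icc 1 (N / f), F f m := by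
  rw [Finset.sum_sigma' (Finset.Icc 1 N) (fun e => e.divisors) (fun e f => F f (e / f)),
    Finset.sum_sigma' (Finset.Icc 1 N) (fun f => Finset.Icc 1 (N / f)) (fun f m => F f m)]
  refine Finset.sum_nbij' (fun p => ⟨p.2, p.1 / p.2⟩) (fun p => ⟨p.1 * p.2, p.1⟩) ?_ ?_ ?_ ?_ ?_
  · rintro ⟨e, f⟩ hp
    simp only [Finset.mem_sigma, Finset.mem_Icc, Nat.mem_divisors] at hp ⊢
    obtain ⟨⟨he1, heN⟩, hfe, he0⟩ := hp
    have he0' : 0 < e := Nat.pos_of_ne_zero he0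
    have hf0 : 0 < f := Nat.pos_of_dvd_of_pos hfe he0'
    have hfle : f ≤ e := Nat.le_of_dvd he0' hfe
    exact ⟨⟨hf0, hfle.trans heN⟩, (Nat.one_le_div_iff hf0).mpr hfle, Nat.div_le_div_right heN⟩
  · rintro ⟨f, m⟩ hp
    simp only [Finset.mem_sigma, Finset.mem_Icc] at hp
    obtain ⟨⟨hf1, hfN⟩, hm1, hmN⟩ := hp
    have hfm : f * m ≤ N := by
      rw [mul_comm]; exact (Nat.le_div_iff_mul_le hf1).mp hmN
    have hpos : 0 < f * m := Nat.mul_pos hf1 hm1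
    exact Finset.mem_sigma.mpr ⟨Finset.mem_Icc.mpr ⟨hpos, hfm⟩,
      Nat.mem_divisors.mpr ⟨dvd_mul_right f m, hpos.ne'⟩⟩
  · rintro ⟨e, f⟩ hp
    simp only [Finset.mem_sigma, Finset.mem_Icc, Nat.mem_divisors] at hp
    obtain ⟨⟨he1, heN⟩, hfe, he0⟩ := hp
    simp only [Sigma.mk.inj_iff]
    exact ⟨Nat.mul_div_cancel' hfe, HEq.rfl⟩
  · rintro ⟨f, m⟩ hp
    simp only [Finset.mem_sigma, Finset.mem_Icc] at hp
    simp only [Sigma.mk.inj_iff]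
    exact ⟨trivial, heq_of_eq (Nat.mul_div_cancel_left m hp.1.1)⟩
  · rintro ⟨e, f⟩ _
    rfl

private lemma term_le (c : ℕ) {e : ℕ} (he : e ≠ 0) :
    ((moebius e : ℤ) : ℝ)^2 * ((c:ℝ)+1)^(e.primeFactors.card)
      ≤ ∑ f ∈ e.divisors, ((moebius f : ℤ) : ℝ)^2 * (c:ℝ)^(f.primeFactors.card) := by
  rw [divisor_identity c he]
  have h0 : (0:ℝ) ≤ ((c:ℝ)+1)^(e.primeFactors.card) := by positivity
  nlinarith [musq_le_one e, sq_nonneg ((moebius e : ℤ) : ℝ)]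

private lemma div_split {e f : ℕ} (hfe : f ∣ e) (x : ℝ) :
    x / (e:ℝ) = x / (f:ℝ) * (1 / ((e / f : ℕ) : ℝ)) := by
  have h : (f * (e / f) : ℕ) = e := Nat.mul_div_cancel' hfe
  have he : (e:ℝ) = (f:ℝ) * ((e / f : ℕ) : ℝ) := by rw [← Nat.cast_mul, h]
  rw [he, ← div_div, div_eq_mul_one_div (x / (f:ℝ))]

private lemma T_bound (b N : ℕ) :
    ∑ e ∈ Finset.Icc 1 N, ((moebius e : ℤ) : ℝ)^2 * (b:ℝ)^(e.primeFactors.card) / e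
      ≤ (∑ m ∈ Finset.Icc 1 N, (1:ℝ)/m)^b := by
  have Hnonneg : (0:ℝ) ≤ ∑ m ∈ Finset.Icc 1 N, (1:ℝ)/m :=
    Finset.sum_nonneg fun m _ => by positivity
  induction b with
  | zero =>
    rw [pow_zero]
    calc ∑ e ∈ Finset.Icc 1 N, ((moebius e : ℤ) : ℝ)^2 * ((0:ℕ):ℝ)^(e.primeFactors.card) / e
        ≤ ∑ e ∈ Finset.Icc 1 N, (if e = 1 then (1:ℝ) else 0) := by
          refine Finset.sum_le_sum fun e hen => ?_
          rcases eq_or_ne e 1 with rfl | he1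
          · simp
          · rw [if_neg he1]
            rw [Finset.mem_Icc] at hen
            by_cases hsq : Squarefree e
            · have h2 : 1 < e := by omega
              have hne : e.primeFactors.Nonempty := Nat.nonempty_primeFactors.mpr h2
              have hcard : e.primeFactors.card ≠ 0 := by
                simpa [Finset.card_eq_zero] using hne.ne_empty
              rw [Nat.cast_zero, zero_pow hcard]
              simp
            · rw [musq, if_neg hsq]
              simp
      _ ≤ 1 := by
          rw [Finset.sum_ite_eq' (Finset.Icc 1 N) 1 (fun _ => (1:ℝ))]
          split_ifs <;> norm_num
  | succ b ih =>
    have key : ∀ e ∈ Finset.Icc 1 N,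
        ((moebius e : ℤ) : ℝ)^2 * ((b+1:ℕ):ℝ)^(e.primeFactors.card) / e
          ≤ ∑ f ∈ e.divisors,
              ((moebius f : ℤ) : ℝ)^2 * (b:ℝ)^(f.primeFactors.card) / f
                * (1 / ((e / f : ℕ) : ℝ)) := by
      intro e hen
      rw [Finset.mem_Icc] at hen
      have he0 : e ≠ 0 := by omega
      have hepos : (0:ℝ) < e := by exact_mod_cast Nat.pos_of_ne_zero he0
      have step1 : ((moebius e : ℤ) : ℝ)^2 * ((b+1:ℕ):ℝ)^(e.primeFactors.card) / e
          ≤ (∑ f ∈ e.divisors, ((moebius f : ℤ) : ℝ)^2 * (b:ℝ)^(f.primeFactors.card)) / e := by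
        rw [div_le_div_iff_of_pos_right hepos]
        have := term_le b he0
        push_cast at this ⊢
        exact this
      refine step1.trans_eq ?_
      rw [Finset.sum_div]
      refine Finset.sum_congr rfl fun f hf => ?_
      have hfe : f ∣ e := (Nat.mem_divisors.mp hf).1
      rw [div_split hfe]
    calc ∑ e ∈ Finset.Icc 1 N,
          ((moebius e : ℤ) : ℝ)^2 * ((b+1:ℕ):ℝ)^(e.primeFactors.card) / e
        ≤ ∑ e ∈ Finset.Icc 1 N, ∑ f ∈ e.divisors,
            ((moebius f : ℤ) : ℝ)^2 * (b:ℝ)^(f.primeFactors.card) / f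
              * (1 / ((e / f : ℕ) : ℝ)) := Finset.sum_le_sum key
      _ = ∑ f ∈ Finset.Icc 1 N, ∑ m ∈ Finset.Icc 1 (N / f),
            ((moebius f : ℤ) : ℝ)^2 * (b:ℝ)^(f.primeFactors.card) / f * (1 / (m:ℝ)) :=
          swap_sum N (fun f m =>
            ((moebius f : ℤ) : ℝ)^2 * (b:ℝ)^(f.primeFactors.card) / f * (1 / (m:ℝ)))
      _ = ∑ f ∈ Finset.Icc 1 N,
            ((moebius f : ℤ) : ℝ)^2 * (b:ℝ)^(f.primeFactors.card) / f
              * ∑ m ∈ Finset.Icc 1 (N / f), (1:ℝ)/m := by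
          refine Finset.sum_congr rfl fun f _ => ?_
          rw [Finset.mul_sum]
      _ ≤ ∑ f ∈ Finset.Icc 1 N,
            ((moebius f : ℤ) : ℝ)^2 * (b:ℝ)^(f.primeFactors.card) / f
              * ∑ m ∈ Finset.Icc 1 N, (1:ℝ)/m := by
          refine Finset.sum_le_sum fun f _ => mul_le_mul_of_nonneg_left ?_ (by positivity)
          exact Finset.sum_le_sum_of_subset_of_nonneg
            (Finset.Icc_subset_Icc_right (Nat.div_le_self N f)) (fun m _ _ => by positivity)
      _ = (∑ f ∈ Finset.Icc 1 N,
            ((moebius f : ℤ) : ℝ)^2 * (b:ℝ)^(f.primeFactors.card) / f)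
              * ∑ m ∈ Finset.Icc 1 N, (1:ℝ)/m := by rw [Finset.sum_mul]
      _ ≤ (∑ m ∈ Finset.Icc 1 N, (1:ℝ)/m)^b * ∑ m ∈ Finset.Icc 1 N, (1:ℝ)/m :=
          mul_le_mul_of_nonneg_right ih Hnonneg
      _ = (∑ m ∈ Finset.Icc 1 N, (1:ℝ)/m)^(b+1) := (pow_succ _ b).symm

open ArithmeticFunction in
/-- For an integer `a ≥ 1`, `∑_{1 ≤ d ≤ X} μ(d)² a^{ω(d)} ≪_a X (log X)^{a-1}`
uniformly for `X > 2`. -/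
theorem stmt_2 (a : ℕ) (ha : 1 ≤ a) :
    ∃ C : ℝ, 0 < C ∧ ∀ X : ℝ, 2 < X →
      ∑ d ∈ Finset.Icc 1 ⌊X⌋₊, ((moebius d : ℝ)^2 * (a : ℝ) ^ d.primeFactors.card) ≤
        C * X * Real.log X ^ (a - 1) := by
  obtain ⟨c, rfl⟩ : ∃ c, a = c + 1 := ⟨a - 1, by omega⟩
  have hlog2 : (0:ℝ) < Real.log 2 := Real.log_pos (by norm_num)
  set C0 : ℝ := 1 / Real.log 2 + 1 with hC0def
  have hC0 : 0 < C0 := by positivity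
  refine ⟨C0 ^ c, pow_pos hC0 c, fun X hX => ?_⟩
  have hX0 : (0:ℝ) < X := by linarith
  set N := ⌊X⌋₊ with hNdef
  have hN2 : 2 ≤ N := Nat.le_floor (by exact_mod_cast hX.le)
  have hNX : (N:ℝ) ≤ X := Nat.floor_le hX0.le
  have hN0 : (0:ℝ) < N := by exact_mod_cast (by omega : 0 < N)
  have hlogX : Real.log 2 < Real.log X := Real.log_lt_log (by norm_num) hX
  have hlogX0 : 0 < Real.log X := hlog2.trans hlogX
  -- harmonic sum bound
  have Hnonneg : (0:ℝ) ≤ ∑ m ∈ Finset.Icc 1 N, (1:ℝ)/m :=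
    Finset.sum_nonneg fun m _ => by positivity
  have Hbound : ∑ m ∈ Finset.Icc 1 N, (1:ℝ)/m ≤ C0 * Real.log X := by
    have h1 : ∑ m ∈ Finset.Icc 1 N, (1:ℝ)/m = (harmonic N : ℝ) := by
      rw [harmonic_eq_sum_Icc]
      push_cast
      exact Finset.sum_congr rfl fun m _ => one_div _
    have h2 : (harmonic N : ℝ) ≤ 1 + Real.log N := harmonic_le_one_add_log N
    have h3 : Real.log N ≤ Real.log X := Real.log_le_log hN0 hNX
    have h4 : (1:ℝ) ≤ (1 / Real.log 2) * Real.log X := by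
      rw [div_mul_eq_mul_div, one_mul, le_div_iff₀ hlog2, one_mul]
      exact hlogX.le
    rw [h1, hC0def]
    calc (harmonic N : ℝ) ≤ 1 + Real.log X := by linarith
      _ ≤ 1 / Real.log 2 * Real.log X + Real.log X := by linarith
      _ = (1 / Real.log 2 + 1) * Real.log X := by ring
  -- main estimate
  have key : ∀ d ∈ Finset.Icc 1 N,
      ((moebius d : ℤ) : ℝ)^2 * ((c+1:ℕ):ℝ)^(d.primeFactors.card)
        ≤ ∑ f ∈ d.divisors,
            ((moebius f : ℤ) : ℝ)^2 * (c:ℝ)^(f.primeFactors.card) := by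
    intro d hdn
    rw [Finset.mem_Icc] at hdn
    have hd0 : d ≠ 0 := by omega
    have := term_le c hd0
    push_cast at this ⊢
    exact this
  calc ∑ d ∈ Finset.Icc 1 N, ((moebius d : ℝ)^2 * ((c+1:ℕ) : ℝ) ^ d.primeFactors.card)
      ≤ ∑ d ∈ Finset.Icc 1 N, ∑ f ∈ d.divisors,
          ((moebius f : ℤ) : ℝ)^2 * (c:ℝ)^(f.primeFactors.card) := Finset.sum_le_sum key
    _ = ∑ f ∈ Finset.Icc 1 N, ∑ m ∈ Finset.Icc 1 (N / f),
          ((moebius f : ℤ) : ℝ)^2 * (c:ℝ)^(f.primeFactors.card) :=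
        swap_sum N (fun f _ => ((moebius f : ℤ) : ℝ)^2 * (c:ℝ)^(f.primeFactors.card))
    _ = ∑ f ∈ Finset.Icc 1 N,
          ((N / f : ℕ) : ℝ) * (((moebius f : ℤ) : ℝ)^2 * (c:ℝ)^(f.primeFactors.card)) := by
        refine Finset.sum_congr rfl fun f _ => ?_
        simp [Finset.sum_const, Nat.card_Icc, nsmul_eq_mul]
    _ ≤ ∑ f ∈ Finset.Icc 1 N,
          (X / f) * (((moebius f : ℤ) : ℝ)^2 * (c:ℝ)^(f.primeFactors.card)) := by
        refine Finset.sum_le_sum fun f hf => ?_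
        rw [Finset.mem_Icc] at hf
        have hf0 : (0:ℝ) < f := by exact_mod_cast hf.1
        refine mul_le_mul_of_nonneg_right ?_ (by positivity)
        calc ((N / f : ℕ) : ℝ) ≤ (N:ℝ) / f := Nat.cast_div_le
          _ ≤ X / f := by gcongr
    _ = X * ∑ f ∈ Finset.Icc 1 N,
          ((moebius f : ℤ) : ℝ)^2 * (c:ℝ)^(f.primeFactors.card) / f := by
        rw [Finset.mul_sum]
        refine Finset.sum_congr rfl fun f _ => by ring
    _ ≤ X * (∑ m ∈ Finset.Icc 1 N, (1:ℝ)/m)^c :=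
        mul_le_mul_of_nonneg_left (T_bound c N) hX0.le
    _ ≤ X * (C0 * Real.log X)^c := by
        refine mul_le_mul_of_nonneg_left (pow_le_pow_left₀ Hnonneg Hbound c) hX0.le
    _ = C0 ^ c * X * Real.log X ^ (c + 1 - 1) := by
        rw [mul_pow]
        simp only [Nat.add_sub_cancel]
        ring
end

section
/- Let $n \geq 2$ and let $p$ be a prime with $p \nmid n$ and $(p+1)/\sqrt{p} > (n-1)(n-2)$. Then for any $a_1, a_2, a_3 \in \mathbb{Z}_p^\times$, the projective curve $a_1 t_1^n + a_2 t_2^n + a_3 t_3^n = 0$ has a point over $\mathbb{Q}_p$, i.e. there exists $(t_1,t_2,t_3) \in \mathbb{Z}_p^3 \setminus p\mathbb{Z}_p^3$ with $a_1 t_1^n + a_2 t_2^n + a_3 t_3^n = 0$. -/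
open Finset

namespace FermatPadic

variable {p : ℕ} [Fact p.Prime]

noncomputable instance : Fintype (MulChar (ZMod p) ℂ) :=
  DirichletCharacter.fintype (R := ℂ) (n := p)

instance : IsCyclic (MulChar (ZMod p) ℂ) := by
  haveI : NeZero (Monoid.exponent (ZMod p)ˣ) :=
    ⟨(Monoid.ExponentExists.of_finite.exponent_pos).ne'⟩
  obtain ⟨e⟩ := MulChar.mulEquiv_units (ZMod p) ℂ
  exact isCyclic_of_surjective e.symm e.symm.surjective

lemma norm_apply_unit (χ : MulChar (ZMod p) ℂ) {x : ZMod p} (hx : IsUnit x) :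
    ‖χ x‖ = 1 := by
  haveI : NeZero (Fintype.card (ZMod p)ˣ) := ⟨Fintype.card_ne_zero⟩
  have h := Complex.norm_eq_one_of_mem_rootsOfUnity <| χ.apply_mem_rootsOfUnity hx.unit
  rwa [MulChar.coe_equivToUnitHom, IsUnit.unit_spec] at h

lemma norm_apply_le (χ : MulChar (ZMod p) ℂ) (x : ZMod p) : ‖χ x‖ ≤ 1 := by
  by_cases hx : IsUnit x
  · exact (norm_apply_unit χ hx).le
  · simp [χ.map_nonunit hx]

lemma norm_jacobiSum {χ φ : MulChar (ZMod p) ℂ} (hχ : χ ≠ 1) (hφ : φ ≠ 1)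
    (hχφ : χ * φ ≠ 1) : ‖jacobiSum χ φ‖ = Real.sqrt p := by
  have hp : (ringChar ℂ) ≠ ringChar (ZMod p) := by
    rw [ringChar.eq_zero (R := ℂ), ZMod.ringChar_zmod_n]
    exact fun h => (Fact.out : p.Prime).ne_zero h.symm
  have key := jacobiSum_mul_jacobiSum_inv hp hχ hφ hχφ
  have hconj : jacobiSum χ⁻¹ φ⁻¹ = (starRingEnd ℂ) (jacobiSum χ φ) := by
    simp only [jacobiSum, map_sum, map_mul]
    refine Finset.sum_congr rfl fun x _ => ?_
    rw [← MulChar.star_apply' χ x, ← MulChar.star_apply' φ (1 - x)]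
    rfl
  have h2 : ‖jacobiSum χ φ‖ ^ 2 = (p : ℝ) := by
    have := congrArg norm key
    rwa [hconj, norm_mul, RCLike.norm_conj, ← sq, Complex.norm_natCast,
      ZMod.card p] at this
  rw [← Real.sqrt_sq (norm_nonneg _), h2]

instance : NeZero (Monoid.exponent (ZMod p)ˣ) :=
  ⟨Monoid.ExponentExists.of_finite.exponent_pos.ne'⟩

variable (p) in
/-- The group of multiplicative characters of order dividing `n`. -/
noncomputable def G (n : ℕ) : Finset (MulChar (ZMod p) ℂ) :=
  Finset.univ.filter (fun χ => χ ^ n = 1)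

lemma mem_G {n : ℕ} {χ : MulChar (ZMod p) ℂ} : χ ∈ G p n ↔ χ ^ n = 1 := by
  simp [G]

lemma one_mem_G (n : ℕ) : (1 : MulChar (ZMod p) ℂ) ∈ G p n := by simp [mem_G]

lemma inv_mem_G {n : ℕ} {χ : MulChar (ZMod p) ℂ} (h : χ ∈ G p n) : χ⁻¹ ∈ G p n := by
  rw [mem_G] at h ⊢
  rw [inv_pow, h, inv_one]

lemma hp1 : ((p : ℂ) - 1) ≠ 0 := by
  have h2 := (Fact.out : p.Prime).two_le
  intro h
  have h1 : (p : ℂ) = 1 := sub_eq_zero.mp h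
  have : p = 1 := by exact_mod_cast h1
  omega

lemma card_units' : ((Fintype.card (ZMod p)ˣ : ℕ) : ℂ) = (p : ℂ) - 1 := by
  rw [ZMod.card_units p, Nat.cast_sub (Fact.out : p.Prime).one_le]
  · simp
  
lemma sum_char_pow (n : ℕ) (hn : n ≠ 0) (χ : MulChar (ZMod p) ℂ) :
    ∑ x : ZMod p, χ (x ^ n) = if χ ^ n = 1 then (p : ℂ) - 1 else 0 := by
  have : ∀ x : ZMod p, χ (x ^ n) = (χ ^ n) x := fun x => by
    rw [MulChar.pow_apply' χ hn, map_pow]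
  simp_rw [this]
  split_ifs with h
  · rw [h]
    classical
    rw [MulChar.sum_one_eq_card_units, card_units']
  · exact MulChar.sum_eq_zero_of_ne_one h

lemma card_pow_eq {n : ℕ} (hn : n ≠ 0) {t : ZMod p} (ht : t ≠ 0) :
    ((Finset.univ.filter (fun x : ZMod p => x ^ n = t)).card : ℂ) = ∑ χ ∈ G p n, χ t := by
  classical
  have step1 : ((Finset.univ.filter (fun x : ZMod p => x ^ n = t)).card : ℂ)
      = ∑ x : ZMod p, if x ^ n = t then (1 : ℂ) else 0 := by
    rw [Finset.card_filter]
    push_cast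
    rfl
  have step2 : ∀ x : ZMod p, (if x ^ n = t then (1 : ℂ) else 0)
      = ((p : ℂ) - 1)⁻¹ * ∑ χ : DirichletCharacter ℂ p, χ (x ^ n * t⁻¹) := by
    intro x
    rcases eq_or_ne x 0 with rfl | hx
    · rw [zero_pow hn, if_neg (Ne.symm ht), zero_mul]
      simp [MulChar.map_zero]
    · have hu : x ^ n * t⁻¹ = 1 ↔ x ^ n = t := mul_inv_eq_one₀ ht
      rw [DirichletCharacter.sum_characters_eq]
      by_cases hxt : x ^ n = t
      · rw [if_pos hxt, if_pos (hu.mpr hxt), Nat.totient_prime (Fact.out : p.Prime)]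
        rw [Nat.cast_sub (Fact.out : p.Prime).one_le, Nat.cast_one]
        rw [inv_mul_cancel₀ hp1]
      · rw [if_neg hxt, if_neg (fun h => hxt (hu.mp h)), mul_zero]
  rw [step1]
  simp_rw [step2, ← Finset.mul_sum]
  have step3 : ∑ x : ZMod p, ∑ χ : DirichletCharacter ℂ p, χ (x ^ n * t⁻¹)
      = ∑ χ : DirichletCharacter ℂ p, (if χ ^ n = 1 then (p : ℂ) - 1 else 0) * χ t⁻¹ := by
    rw [Finset.sum_comm]
    refine Finset.sum_congr rfl fun χ _ => ?_
    simp_rw [map_mul, ← Finset.sum_mul]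
    rw [sum_char_pow n hn χ]
  rw [step3]
  have step4 : ∑ χ : DirichletCharacter ℂ p, (if χ ^ n = 1 then (p : ℂ) - 1 else 0) * χ t⁻¹
      = ((p : ℂ) - 1) * ∑ χ ∈ G p n, χ t⁻¹ := by
    rw [Finset.mul_sum, G]
    rw [Finset.sum_filter]
    refine Finset.sum_congr rfl fun χ _ => ?_
    split_ifs <;> simp
  rw [step4, ← mul_assoc, inv_mul_cancel₀ hp1, one_mul]
  refine Finset.sum_nbij' (fun χ => χ⁻¹) (fun χ => χ⁻¹) ?_ ?_ ?_ ?_ ?_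
  · exact fun χ h => inv_mem_G h
  · exact fun χ h => inv_mem_G h
  · intro χ _; exact inv_inv χ
  · intro χ _; exact inv_inv χ
  · intro χ _; rw [MulChar.inv_apply']

lemma card_pow_eq' {n : ℕ} (hn : n ≠ 0) (t : ZMod p) :
    ((Finset.univ.filter (fun x : ZMod p => x ^ n = t)).card : ℂ)
      = (∑ χ ∈ G p n, χ t) + if t = 0 then 1 else 0 := by
  classical
  rcases eq_or_ne t 0 with rfl | ht
  · rw [if_pos rfl]
    have h1 : (Finset.univ.filter (fun x : ZMod p => x ^ n = 0)) = {0} := by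
      ext x
      simp [pow_eq_zero_iff hn]
    have h2 : ∀ χ ∈ G p n, χ (0 : ZMod p) = 0 := fun χ _ => MulChar.map_zero χ
    rw [h1, Finset.sum_congr rfl h2]
    simp
  · rw [if_neg ht, card_pow_eq hn ht, add_zero]


variable {p : ℕ} [Fact p.Prime]

lemma sum_char (ψ : MulChar (ZMod p) ℂ) :
    ∑ x : ZMod p, ψ x = if ψ = 1 then (p : ℂ) - 1 else 0 := by
  split_ifs with h
  · rw [h]
    classical
    rw [MulChar.sum_one_eq_card_units, card_units']
  · exact MulChar.sum_eq_zero_of_ne_one h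

lemma sum_translate {e : ZMod p} (he : e ≠ 0) (A B : ZMod p)
    (χ φ : MulChar (ZMod p) ℂ) :
    ∑ u : ZMod p, χ (A * u) * φ (B * (e - u))
      = χ (A * e) * φ (B * e) * jacobiSum χ φ := by
  have key : ∀ s : ZMod p, χ (A * e) * φ (B * e) * (χ s * φ (1 - s))
      = χ (A * (e * s)) * φ (B * (e - e * s)) := by
    intro s
    have h1 : A * (e * s) = (A * e) * s := by ring
    have h2 : B * (e - e * s) = (B * e) * (1 - s) := by ring
    rw [h1, h2, map_mul χ (A * e) s, map_mul φ (B * e) (1 - s)]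
    ring
  calc ∑ u : ZMod p, χ (A * u) * φ (B * (e - u))
      = ∑ s : ZMod p, χ (A * e) * φ (B * e) * (χ s * φ (1 - s)) :=
        (Fintype.sum_equiv (Equiv.mulLeft₀ e he) _ _ (fun s => key s)).symm
    _ = χ (A * e) * φ (B * e) * jacobiSum χ φ := by
        rw [jacobiSum, Finset.mul_sum]

lemma fiber (n : ℕ) (a b : ZMod p) (e : ZMod p) :
    ((Finset.univ.filter
        (fun q : ZMod p × ZMod p => a * q.1 ^ n + b * q.2 ^ n = e)).card : ℂ)
      = ∑ u : ZMod p,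
          ((Finset.univ.filter (fun x : ZMod p => a * x ^ n = u)).card : ℂ)
            * ((Finset.univ.filter (fun y : ZMod p => b * y ^ n = e - u)).card : ℂ) := by
  classical
  have inner : ∀ x y : ZMod p,
      ∑ u : ZMod p, (if a * x ^ n = u then (1 : ℂ) else 0)
          * (if b * y ^ n = e - u then (1 : ℂ) else 0)
        = if a * x ^ n + b * y ^ n = e then (1 : ℂ) else 0 := by
    intro x y
    rw [Finset.sum_eq_single (a * x ^ n)]
    · rw [if_pos rfl, one_mul]
      congr 1
      simp only [eq_iff_iff]
      constructor
      · intro h; linear_combination h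
      · intro h; linear_combination h
    · intro u _ hu
      rw [if_neg (fun h => hu h.symm), zero_mul]
    · intro h; exact absurd (Finset.mem_univ _) h
  calc ((Finset.univ.filter
        (fun q : ZMod p × ZMod p => a * q.1 ^ n + b * q.2 ^ n = e)).card : ℂ)
      = ∑ q : ZMod p × ZMod p,
          if a * q.1 ^ n + b * q.2 ^ n = e then (1 : ℂ) else 0 := by
        rw [Finset.card_filter]; push_cast; rfl
    _ = ∑ x : ZMod p, ∑ y : ZMod p,
          if a * x ^ n + b * y ^ n = e then (1 : ℂ) else 0 := by
        rw [Fintype.sum_prod_type]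
    _ = ∑ x : ZMod p, ∑ y : ZMod p, ∑ u : ZMod p,
          (if a * x ^ n = u then (1 : ℂ) else 0)
            * (if b * y ^ n = e - u then (1 : ℂ) else 0) := by
        refine Finset.sum_congr rfl fun x _ => Finset.sum_congr rfl fun y _ => ?_
        rw [inner x y]
    _ = ∑ u : ZMod p,
          (∑ x : ZMod p, if a * x ^ n = u then (1 : ℂ) else 0)
            * (∑ y : ZMod p, if b * y ^ n = e - u then (1 : ℂ) else 0) := by
        symm
        simp_rw [Finset.sum_mul_sum]
        rw [Finset.sum_comm]
        exact Finset.sum_congr rfl fun x _ => Finset.sum_comm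
    _ = ∑ u : ZMod p,
          ((Finset.univ.filter (fun x : ZMod p => a * x ^ n = u)).card : ℂ)
            * ((Finset.univ.filter (fun y : ZMod p => b * y ^ n = e - u)).card : ℂ) := by
        refine Finset.sum_congr rfl fun u _ => ?_
        rw [Finset.card_filter, Finset.card_filter]
        push_cast
        rfl

/-- Count of `x` with `a * x ^ n = u`, via characters. -/
lemma card_axn {n : ℕ} (hn : n ≠ 0) {a : ZMod p} (ha : a ≠ 0) (u : ZMod p) :
    ((Finset.univ.filter (fun x : ZMod p => a * x ^ n = u)).card : ℂ)
      = (∑ χ ∈ G p n, χ (a⁻¹ * u)) + if u = 0 then 1 else 0 := by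
  classical
  have hfil : (Finset.univ.filter (fun x : ZMod p => a * x ^ n = u))
      = (Finset.univ.filter (fun x : ZMod p => x ^ n = a⁻¹ * u)) := by
    refine Finset.filter_congr fun x _ => ?_
    constructor
    · intro h; rw [← h]; field_simp
    · intro h; rw [h]; field_simp
  rw [hfil, card_pow_eq' hn]
  congr 1
  have : a⁻¹ * u = 0 ↔ u = 0 := by
    constructor
    · intro h
      rcases mul_eq_zero.mp h with h' | h'
      · exact absurd h' (inv_ne_zero ha)
      · exact h'
    · intro h; rw [h, mul_zero]
  simp only [this]
variable {p : ℕ} [Fact p.Prime]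

variable (p) in
/-- Pairs of nontrivial characters of order dividing `n` with nontrivial product. -/
noncomputable def P (n : ℕ) : Finset (MulChar (ZMod p) ℂ × MulChar (ZMod p) ℂ) :=
  (((G p n).erase 1) ×ˢ ((G p n).erase 1)).filter (fun q => q.1 * q.2 ≠ 1)

variable (p) in
/-- The contribution of the pairs `(χ, χ⁻¹)`. -/
noncomputable def CC (n : ℕ) (a b : ZMod p) : ℂ :=
  -∑ χ ∈ (G p n).erase 1, χ (-(a⁻¹ * b))

lemma mul_apply' (χ φ : MulChar (ZMod p) ℂ) (u : ZMod p) :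
    (χ * φ) u = χ u * φ u := by
  rw [MulChar.coeToFun_mul, Pi.mul_apply]

lemma A_e_formula {n : ℕ} (hn : n ≠ 0) {a b : ZMod p} (ha : a ≠ 0) (hb : b ≠ 0)
    {e : ZMod p} (he : e ≠ 0) :
    ((Finset.univ.filter
        (fun q : ZMod p × ZMod p => a * q.1 ^ n + b * q.2 ^ n = e)).card : ℂ)
      = p + CC p n a b
        + ∑ q ∈ P p n, q.1 (a⁻¹ * e) * q.2 (b⁻¹ * e) * jacobiSum q.1 q.2 := by
  classical
  have hae : IsUnit (a⁻¹ * e) := (mul_ne_zero (inv_ne_zero ha) he).isUnit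
  have hbe : IsUnit (b⁻¹ * e) := (mul_ne_zero (inv_ne_zero hb) he).isUnit
  set f : MulChar (ZMod p) ℂ × MulChar (ZMod p) ℂ → ℂ :=
    fun q => q.1 (a⁻¹ * e) * q.2 (b⁻¹ * e) * jacobiSum q.1 q.2 with hf
  set rA : ℂ := ∑ χ ∈ G p n, χ (a⁻¹ * e) with hrA
  set rB : ℂ := ∑ χ ∈ G p n, χ (b⁻¹ * e) with hrB
  have step1 : ((Finset.univ.filter
        (fun q : ZMod p × ZMod p => a * q.1 ^ n + b * q.2 ^ n = e)).card : ℂ)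
      = (∑ u : ZMod p, (∑ χ ∈ G p n, χ (a⁻¹ * u)) * (∑ φ ∈ G p n, φ (b⁻¹ * (e - u))))
        + rA + rB := by
    rw [fiber]
    have expand : ∀ u : ZMod p,
        ((Finset.univ.filter (fun x : ZMod p => a * x ^ n = u)).card : ℂ)
          * ((Finset.univ.filter (fun y : ZMod p => b * y ^ n = e - u)).card : ℂ)
        = (∑ χ ∈ G p n, χ (a⁻¹ * u)) * (∑ φ ∈ G p n, φ (b⁻¹ * (e - u)))
          + (if u = e then (1:ℂ) else 0) * (∑ χ ∈ G p n, χ (a⁻¹ * u))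
          + (if u = 0 then (1:ℂ) else 0) * (∑ φ ∈ G p n, φ (b⁻¹ * (e - u)))
          + (if u = 0 then (1:ℂ) else 0) * (if u = e then (1:ℂ) else 0) := by
      intro u
      rw [card_axn hn ha u, card_axn hn hb (e - u)]
      have h1 : (if e - u = 0 then (1:ℂ) else 0) = if u = e then (1:ℂ) else 0 := by
        simp [sub_eq_zero, eq_comm]
      rw [h1]
      ring
    rw [Finset.sum_congr rfl fun u _ => expand u]
    rw [Finset.sum_add_distrib, Finset.sum_add_distrib, Finset.sum_add_distrib]
    have hz1 : ∑ u : ZMod p, (if u = e then (1:ℂ) else 0) * (∑ χ ∈ G p n, χ (a⁻¹ * u))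
        = rA := by
      simp only [ite_mul, one_mul, zero_mul, Finset.sum_ite_eq', Finset.mem_univ, if_true,
        hrA]
    have hz2 : ∑ u : ZMod p, (if u = 0 then (1:ℂ) else 0) * (∑ φ ∈ G p n, φ (b⁻¹ * (e - u)))
        = rB := by
      simp only [ite_mul, one_mul, zero_mul, Finset.sum_ite_eq', Finset.mem_univ, if_true,
        sub_zero, hrB]
    have hz3 : ∑ u : ZMod p, (if u = 0 then (1:ℂ) else 0) * (if u = e then (1:ℂ) else 0)
        = 0 := by
      simp only [ite_mul, one_mul, zero_mul, Finset.sum_ite_eq', Finset.mem_univ, if_true]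
      rw [if_neg (Ne.symm he)]
    rw [hz1, hz2, hz3, add_zero]
  have step2 : ∑ u : ZMod p, (∑ χ ∈ G p n, χ (a⁻¹ * u)) * (∑ φ ∈ G p n, φ (b⁻¹ * (e - u)))
      = ∑ q ∈ (G p n) ×ˢ (G p n), f q := by
    rw [Finset.sum_product]
    symm
    calc ∑ χ ∈ G p n, ∑ φ ∈ G p n, f (χ, φ)
        = ∑ χ ∈ G p n, ∑ φ ∈ G p n, ∑ u : ZMod p, χ (a⁻¹ * u) * φ (b⁻¹ * (e - u)) := by
          refine Finset.sum_congr rfl fun χ _ => Finset.sum_congr rfl fun φ _ => ?_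
          exact (sum_translate he a⁻¹ b⁻¹ χ φ).symm
      _ = ∑ u : ZMod p, ∑ χ ∈ G p n, ∑ φ ∈ G p n, χ (a⁻¹ * u) * φ (b⁻¹ * (e - u)) := by
          symm
          rw [Finset.sum_comm]
          refine Finset.sum_congr rfl fun χ _ => ?_
          rw [Finset.sum_comm]
      _ = ∑ u : ZMod p, (∑ χ ∈ G p n, χ (a⁻¹ * u)) * (∑ φ ∈ G p n, φ (b⁻¹ * (e - u))) := by
          refine Finset.sum_congr rfl fun u _ => ?_
          rw [Finset.sum_mul_sum]
  have h1G := one_mem_G (p := p) n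
  have split1 : ∑ q ∈ (G p n) ×ˢ (G p n), f q
      = (∑ φ ∈ G p n, f (1, φ)) + ∑ q ∈ ((G p n).erase 1) ×ˢ (G p n), f q := by
    rw [← Finset.sum_filter_add_sum_filter_not ((G p n) ×ˢ (G p n)) (fun q => q.1 = 1) f]
    congr 1
    · have h : Finset.filter (fun q => q.1 = 1) ((G p n) ×ˢ (G p n))
          = ({1} : Finset (MulChar (ZMod p) ℂ)) ×ˢ (G p n) := by
        ext q
        simp only [Finset.mem_filter, Finset.mem_product, Finset.mem_singleton]
        constructor
        · rintro ⟨⟨_, h2⟩, h3⟩; exact ⟨h3, h2⟩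
        · rintro ⟨h3, h2⟩; exact ⟨⟨h3 ▸ h1G, h2⟩, h3⟩
      rw [h, Finset.sum_product, Finset.sum_singleton]
    · congr 1
      ext q
      simp only [Finset.mem_filter, Finset.mem_product, Finset.mem_erase]
      tauto
  have split2 : ∑ q ∈ ((G p n).erase 1) ×ˢ (G p n), f q
      = (∑ χ ∈ (G p n).erase 1, f (χ, 1))
        + ∑ q ∈ ((G p n).erase 1) ×ˢ ((G p n).erase 1), f q := by
    rw [← Finset.sum_filter_add_sum_filter_not (((G p n).erase 1) ×ˢ (G p n))
      (fun q => q.2 = 1) f]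
    congr 1
    · have h : Finset.filter (fun q => q.2 = 1) (((G p n).erase 1) ×ˢ (G p n))
          = ((G p n).erase 1) ×ˢ ({1} : Finset (MulChar (ZMod p) ℂ)) := by
        ext q
        simp only [Finset.mem_filter, Finset.mem_product, Finset.mem_singleton]
        constructor
        · rintro ⟨⟨h1, _⟩, h3⟩; exact ⟨h1, h3⟩
        · rintro ⟨h1, h3⟩; exact ⟨⟨h1, h3 ▸ h1G⟩, h3⟩
      rw [h, Finset.sum_product]
      exact Finset.sum_congr rfl fun χ _ => Finset.sum_singleton _ _
    · congr 1
      ext q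
      simp only [Finset.mem_filter, Finset.mem_product, Finset.mem_erase]
      tauto
  have split3 : ∑ q ∈ ((G p n).erase 1) ×ˢ ((G p n).erase 1), f q
      = (∑ q ∈ Finset.filter (fun q => q.1 * q.2 = 1)
            (((G p n).erase 1) ×ˢ ((G p n).erase 1)), f q)
        + ∑ q ∈ P p n, f q := by
    rw [← Finset.sum_filter_add_sum_filter_not (((G p n).erase 1) ×ˢ ((G p n).erase 1))
      (fun q => q.1 * q.2 = 1) f]
    rfl
  have eval1 : ∑ φ ∈ G p n, f (1, φ) = ((p : ℂ) - 2) - (rB - 1) := by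
    rw [← Finset.add_sum_erase _ _ h1G]
    have h11 : f (1, 1) = (p : ℂ) - 2 := by
      simp only [hf, MulChar.one_apply hae, MulChar.one_apply hbe, one_mul,
        jacobiSum_one_one, ZMod.card]
    have hrest : ∀ φ ∈ (G p n).erase 1, f (1, φ) = -(φ (b⁻¹ * e)) := by
      intro φ hφ
      have hφ1 : φ ≠ 1 := (Finset.mem_erase.mp hφ).1
      simp only [hf, MulChar.one_apply hae, one_mul, jacobiSum_one_nontrivial hφ1]
      ring
    have hB : rB = 1 + ∑ φ ∈ (G p n).erase 1, φ (b⁻¹ * e) := by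
      rw [hrB, ← Finset.add_sum_erase _ _ h1G, MulChar.one_apply hbe]
    rw [h11, Finset.sum_congr rfl hrest, Finset.sum_neg_distrib, hB]
    ring
  have eval2 : ∑ χ ∈ (G p n).erase 1, f (χ, 1) = -(rA - 1) := by
    have hrest : ∀ χ ∈ (G p n).erase 1, f (χ, 1) = -(χ (a⁻¹ * e)) := by
      intro χ hχ
      have hχ1 : χ ≠ 1 := (Finset.mem_erase.mp hχ).1
      rw [hf]
      simp only
      rw [jacobiSum_comm χ 1, jacobiSum_one_nontrivial hχ1, MulChar.one_apply hbe]
      ring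
    have hA : rA = 1 + ∑ χ ∈ (G p n).erase 1, χ (a⁻¹ * e) := by
      rw [hrA, ← Finset.add_sum_erase _ _ h1G, MulChar.one_apply hae]
    rw [Finset.sum_congr rfl hrest, Finset.sum_neg_distrib, hA]
    ring
  have eval3 : ∑ q ∈ Finset.filter (fun q => q.1 * q.2 = 1)
      (((G p n).erase 1) ×ˢ ((G p n).erase 1)), f q = CC p n a b := by
    rw [CC, ← Finset.sum_neg_distrib]
    refine Finset.sum_nbij' (fun q => q.1) (fun χ => (χ, χ⁻¹)) ?_ ?_ ?_ ?_ ?_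
    · intro q hq
      simp only [Finset.mem_filter, Finset.mem_product] at hq
      exact hq.1.1
    · intro χ hχ
      obtain ⟨hχ1, hχG⟩ := Finset.mem_erase.mp hχ
      simp only [Finset.mem_filter, Finset.mem_product]
      exact ⟨⟨hχ, Finset.mem_erase.mpr ⟨inv_ne_one.mpr hχ1, inv_mem_G hχG⟩⟩,
        mul_inv_cancel χ⟩
    · intro q hq
      simp only [Finset.mem_filter, Finset.mem_product] at hq
      have h2 : q.2 = q.1⁻¹ := eq_inv_of_mul_eq_one_right hq.2
      exact Prod.ext rfl h2.symm
    · intro χ _; rfl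
    · intro q hq
      simp only [Finset.mem_filter, Finset.mem_product, Finset.mem_erase] at hq
      obtain ⟨⟨⟨hq1, _⟩, _⟩, hq2⟩ := hq
      have hq2' : q.2 = q.1⁻¹ := eq_inv_of_mul_eq_one_right hq2
      rw [hf]
      simp only
      have collect : ∀ x y z : ZMod p, q.1 x * q.1 y * -(q.1 z) = -(q.1 (x * y * z)) := by
        intro x y z
        rw [map_mul, map_mul]
        ring
      rw [hq2', jacobiSum_nontrivial_inv hq1, MulChar.inv_apply', collect]
      congr 1
      congr 1
      rw [mul_inv, inv_inv]
      field_simp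
  rw [step1, step2, split1, split2, split3, eval1, eval2, eval3]
  ring

lemma A_0_formula {n : ℕ} (hn : n ≠ 0) {a b : ZMod p} (ha : a ≠ 0) (hb : b ≠ 0) :
    ((Finset.univ.filter
        (fun q : ZMod p × ZMod p => a * q.1 ^ n + b * q.2 ^ n = 0)).card : ℂ)
      = p - ((p : ℂ) - 1) * CC p n a b := by
  classical
  have hab : IsUnit (-(a⁻¹ * b)) :=
    (neg_ne_zero.mpr (mul_ne_zero (inv_ne_zero ha) hb)).isUnit
  rw [fiber]
  have expand : ∀ u : ZMod p,
      ((Finset.univ.filter (fun x : ZMod p => a * x ^ n = u)).card : ℂ)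
        * ((Finset.univ.filter (fun y : ZMod p => b * y ^ n = 0 - u)).card : ℂ)
      = (∑ χ ∈ G p n, χ (a⁻¹ * u)) * (∑ φ ∈ G p n, φ (b⁻¹ * (0 - u)))
        + (if u = 0 then (1:ℂ) else 0) * (∑ χ ∈ G p n, χ (a⁻¹ * u))
        + (if u = 0 then (1:ℂ) else 0) * (∑ φ ∈ G p n, φ (b⁻¹ * (0 - u)))
        + (if u = 0 then (1:ℂ) else 0) := by
    intro u
    rw [card_axn hn ha u, card_axn hn hb (0 - u)]
    have h1 : (if 0 - u = 0 then (1:ℂ) else 0) = if u = 0 then (1:ℂ) else 0 := by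
      simp [sub_eq_zero, eq_comm]
    rw [h1]
    by_cases hu : u = 0 <;> simp [hu] <;> ring
  rw [Finset.sum_congr rfl fun u _ => expand u]
  rw [Finset.sum_add_distrib, Finset.sum_add_distrib, Finset.sum_add_distrib]
  have hz1 : ∑ u : ZMod p, (if u = 0 then (1:ℂ) else 0) * (∑ χ ∈ G p n, χ (a⁻¹ * u))
      = 0 := by
    simp only [ite_mul, one_mul, zero_mul, Finset.sum_ite_eq', Finset.mem_univ, if_true]
    simp [MulChar.map_zero]
  have hz2 : ∑ u : ZMod p, (if u = 0 then (1:ℂ) else 0) * (∑ φ ∈ G p n, φ (b⁻¹ * (0 - u)))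
      = 0 := by
    simp only [ite_mul, one_mul, zero_mul, Finset.sum_ite_eq', Finset.mem_univ, if_true]
    simp [MulChar.map_zero]
  have hz3 : ∑ u : ZMod p, (if u = 0 then (1:ℂ) else 0) = 1 := by
    simp
  rw [hz1, hz2, hz3]
  have key : ∀ u : ZMod p, ∀ χ φ : MulChar (ZMod p) ℂ,
      χ (a⁻¹ * u) * φ (b⁻¹ * (0 - u)) = (χ a⁻¹ * φ (-b⁻¹)) * (χ * φ) u := by
    intro u χ φ
    have h1 : a⁻¹ * u = a⁻¹ * u := rfl
    have h2 : b⁻¹ * (0 - u) = (-b⁻¹) * u := by ring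
    rw [h2, map_mul, map_mul, mul_apply']
    ring
  have main : ∑ u : ZMod p, (∑ χ ∈ G p n, χ (a⁻¹ * u)) * (∑ φ ∈ G p n, φ (b⁻¹ * (0 - u)))
      = ((p : ℂ) - 1) * ∑ χ ∈ G p n, χ (-(a⁻¹ * b)) := by
    calc ∑ u : ZMod p, (∑ χ ∈ G p n, χ (a⁻¹ * u)) * (∑ φ ∈ G p n, φ (b⁻¹ * (0 - u)))
        = ∑ q ∈ (G p n) ×ˢ (G p n),
            (q.1 a⁻¹ * q.2 (-b⁻¹)) * ∑ u : ZMod p, (q.1 * q.2) u := by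
          symm
          rw [Finset.sum_product]
          calc ∑ χ ∈ G p n, ∑ φ ∈ G p n, (χ a⁻¹ * φ (-b⁻¹)) * ∑ u : ZMod p, (χ * φ) u
              = ∑ χ ∈ G p n, ∑ φ ∈ G p n, ∑ u : ZMod p, χ (a⁻¹ * u) * φ (b⁻¹ * (0 - u)) := by
                refine Finset.sum_congr rfl fun χ _ => Finset.sum_congr rfl fun φ _ => ?_
                rw [Finset.mul_sum]
                exact Finset.sum_congr rfl fun u _ => (key u χ φ).symm
            _ = ∑ u : ZMod p, ∑ χ ∈ G p n, ∑ φ ∈ G p n, χ (a⁻¹ * u) * φ (b⁻¹ * (0 - u)) := by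
                symm
                rw [Finset.sum_comm]
                refine Finset.sum_congr rfl fun χ _ => ?_
                rw [Finset.sum_comm]
            _ = ∑ u : ZMod p, (∑ χ ∈ G p n, χ (a⁻¹ * u)) * (∑ φ ∈ G p n, φ (b⁻¹ * (0 - u))) := by
                refine Finset.sum_congr rfl fun u _ => ?_
                rw [Finset.sum_mul_sum]
      _ = ∑ q ∈ Finset.filter (fun q => q.1 * q.2 = 1) ((G p n) ×ˢ (G p n)),
            (q.1 a⁻¹ * q.2 (-b⁻¹)) * ((p : ℂ) - 1) := by
          rw [Finset.sum_filter]
          refine Finset.sum_congr rfl fun q _ => ?_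
          rw [sum_char]
          split_ifs <;> simp
      _ = ∑ χ ∈ G p n, (χ a⁻¹ * χ⁻¹ (-b⁻¹)) * ((p : ℂ) - 1) := by
          refine Finset.sum_nbij' (fun q => q.1) (fun χ => (χ, χ⁻¹)) ?_ ?_ ?_ ?_ ?_
          · intro q hq
            simp only [Finset.mem_filter, Finset.mem_product] at hq
            exact hq.1.1
          · intro χ hχ
            simp only [Finset.mem_filter, Finset.mem_product]
            exact ⟨⟨hχ, inv_mem_G hχ⟩, mul_inv_cancel χ⟩
          · intro q hq
            simp only [Finset.mem_filter, Finset.mem_product] at hq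
            exact Prod.ext rfl (eq_inv_of_mul_eq_one_right hq.2).symm
          · intro χ _; rfl
          · intro q hq
            simp only [Finset.mem_filter, Finset.mem_product] at hq
            rw [(eq_inv_of_mul_eq_one_right hq.2)]
      _ = ((p : ℂ) - 1) * ∑ χ ∈ G p n, χ (-(a⁻¹ * b)) := by
          rw [Finset.mul_sum]
          refine Finset.sum_congr rfl fun χ _ => ?_
          rw [MulChar.inv_apply', ← map_mul]
          have harg : a⁻¹ * (-b⁻¹)⁻¹ = -(a⁻¹ * b) := by
            rw [inv_neg, inv_inv]
            ring
          rw [harg]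
          ring
  rw [main]
  have hG : ∑ χ ∈ G p n, χ (-(a⁻¹ * b)) = 1 - CC p n a b := by
    rw [CC, ← Finset.add_sum_erase _ _ (one_mem_G (p := p) n), MulChar.one_apply hab]
    ring
  rw [hG]
  ring
variable {p : ℕ} [Fact p.Prime]

lemma mem_P {n : ℕ} {q : MulChar (ZMod p) ℂ × MulChar (ZMod p) ℂ} :
    q ∈ P p n ↔ ((q.1 ≠ 1 ∧ q.1 ∈ G p n) ∧ (q.2 ≠ 1 ∧ q.2 ∈ G p n)) ∧ q.1 * q.2 ≠ 1 := by
  simp only [P, Finset.mem_filter, Finset.mem_product, Finset.mem_erase]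

lemma card_G_le {n : ℕ} (hn : 0 < n) : (G p n).card ≤ n := by
  classical
  have h := IsCyclic.card_pow_eq_one_le (α := MulChar (ZMod p) ℂ) hn
  refine le_trans (le_of_eq ?_) h
  rw [G]

lemma card_P_le {n : ℕ} (hn : 2 ≤ n) : (P p n).card ≤ (n - 1) * (n - 2) := by
  classical
  set E := (G p n).erase 1 with hE
  have hEn : E.card ≤ n - 1 := by
    have h1 := Finset.card_erase_add_one (one_mem_G (p := p) n)
    rw [← hE] at h1
    have h2 := card_G_le (p := p) (n := n) (by omega)
    omega
  set D := Finset.image (fun χ : MulChar (ZMod p) ℂ => (χ, χ⁻¹)) E with hD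
  have hDsub : D ⊆ E ×ˢ E := by
    intro q hq
    obtain ⟨χ, hχ, rfl⟩ := Finset.mem_image.mp hq
    obtain ⟨hχ1, hχG⟩ := Finset.mem_erase.mp hχ
    exact Finset.mem_product.mpr ⟨hχ, Finset.mem_erase.mpr ⟨inv_ne_one.mpr hχ1, inv_mem_G hχG⟩⟩
  have hDcard : D.card = E.card :=
    Finset.card_image_of_injective E (fun χ φ h => (Prod.ext_iff.mp h).1)
  have hPsub : P p n ⊆ (E ×ˢ E) \ D := by
    intro q hq
    obtain ⟨⟨h1, h2⟩, h12⟩ := mem_P.mp hq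
    refine Finset.mem_sdiff.mpr ⟨Finset.mem_product.mpr
      ⟨Finset.mem_erase.mpr ⟨h1.1, h1.2⟩, Finset.mem_erase.mpr ⟨h2.1, h2.2⟩⟩, ?_⟩
    intro hmem
    obtain ⟨χ, _, hχeq⟩ := Finset.mem_image.mp hmem
    apply h12
    rw [← hχeq]
    exact mul_inv_cancel χ
  have hcalc : (P p n).card ≤ E.card * E.card - E.card := by
    calc (P p n).card ≤ ((E ×ˢ E) \ D).card := Finset.card_le_card hPsub
      _ = (E ×ˢ E).card - D.card := Finset.card_sdiff_of_subset hDsub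
      _ = E.card * E.card - E.card := by rw [Finset.card_product, hDcard]
  have hmm : E.card * E.card - E.card = E.card * (E.card - 1) := by
    rcases Nat.eq_zero_or_pos E.card with h | h
    · simp [h]
    · have := Nat.mul_sub E.card E.card 1
      omega
  refine hcalc.trans ?_
  rw [hmm]
  exact Nat.mul_le_mul hEn (by omega)

lemma ff_exists {n : ℕ} (hn : 2 ≤ n)
    (hHW : (((n:ℝ) - 1) * ((n:ℝ) - 2)) * Real.sqrt p < (p : ℝ) + 1)
    {a b c : ZMod p} (ha : a ≠ 0) (hb : b ≠ 0) (hc : c ≠ 0) :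
    ∃ x y z : ZMod p, ¬(x = 0 ∧ y = 0 ∧ z = 0)
      ∧ a * x ^ n + b * y ^ n + c * z ^ n = 0 := by
  classical
  have hn0 : n ≠ 0 := by omega
  set Nz : ℕ := ∑ z : ZMod p,
    (Finset.univ.filter
      (fun q : ZMod p × ZMod p => a * q.1 ^ n + b * q.2 ^ n = -(c * z ^ n))).card with hNz
  set S : ℂ := ∑ q ∈ P p n, q.1 (-(a⁻¹ * c)) * q.2 (-(b⁻¹ * c)) * jacobiSum q.1 q.2 with hS
  -- Step 1: the formula
  have formula : (Nz : ℂ) = (p : ℂ) ^ 2 + ((p : ℂ) - 1) * S := by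
    have hsplit : (Nz : ℂ) = ((Finset.univ.filter
        (fun q : ZMod p × ZMod p => a * q.1 ^ n + b * q.2 ^ n = -(c * (0:ZMod p) ^ n))).card : ℂ)
        + ∑ z ∈ Finset.univ.erase (0 : ZMod p), ((Finset.univ.filter
        (fun q : ZMod p × ZMod p => a * q.1 ^ n + b * q.2 ^ n = -(c * z ^ n))).card : ℂ) := by
      rw [hNz]
      push_cast
      rw [← Finset.add_sum_erase Finset.univ _ (Finset.mem_univ (0 : ZMod p))]
    have hzero : -(c * (0:ZMod p) ^ n) = 0 := by
      rw [zero_pow hn0, mul_zero, neg_zero]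
    have hterm : ∀ z ∈ Finset.univ.erase (0 : ZMod p),
        ((Finset.univ.filter
          (fun q : ZMod p × ZMod p => a * q.1 ^ n + b * q.2 ^ n = -(c * z ^ n))).card : ℂ)
        = (p : ℂ) + CC p n a b + S := by
      intro z hz
      have hz0 : z ≠ 0 := (Finset.mem_erase.mp hz).1
      have hez : -(c * z ^ n) ≠ 0 :=
        neg_ne_zero.mpr (mul_ne_zero hc (pow_ne_zero n hz0))
      rw [A_e_formula hn0 ha hb hez]
      congr 1
      rw [hS]
      refine Finset.sum_congr rfl fun q hq => ?_
      obtain ⟨⟨⟨hq1, hq1G⟩, hq2, hq2G⟩, hq12⟩ := mem_P.mp hq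
      have harg1 : a⁻¹ * -(c * z ^ n) = -(a⁻¹ * c) * z ^ n := by ring
      have harg2 : b⁻¹ * -(c * z ^ n) = -(b⁻¹ * c) * z ^ n := by ring
      rw [harg1, harg2, map_mul, map_mul]
      have hone : q.1 (z ^ n) * q.2 (z ^ n) = 1 := by
        rw [← mul_apply', map_pow, ← MulChar.pow_apply' (q.1 * q.2) hn0 z, mul_pow,
          mem_G.mp hq1G, mem_G.mp hq2G, one_mul]
        exact MulChar.one_apply (hz0.isUnit)
      calc q.1 (-(a⁻¹ * c)) * q.1 (z ^ n) * (q.2 (-(b⁻¹ * c)) * q.2 (z ^ n))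
            * jacobiSum q.1 q.2
          = q.1 (-(a⁻¹ * c)) * q.2 (-(b⁻¹ * c)) * jacobiSum q.1 q.2
            * (q.1 (z ^ n) * q.2 (z ^ n)) := by ring
        _ = q.1 (-(a⁻¹ * c)) * q.2 (-(b⁻¹ * c)) * jacobiSum q.1 q.2 := by
            rw [hone, mul_one]
    have hcarde : ((Finset.univ.erase (0 : ZMod p)).card : ℂ) = (p : ℂ) - 1 := by
      rw [Finset.card_erase_of_mem (Finset.mem_univ _), Finset.card_univ, ZMod.card,
        Nat.cast_sub (Fact.out : p.Prime).one_le, Nat.cast_one]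
    rw [hsplit, hzero, A_0_formula hn0 ha hb, Finset.sum_congr rfl hterm,
      Finset.sum_const, nsmul_eq_mul, hcarde]
    ring
  -- Step 2: the bound
  have hp2 : (2 : ℝ) ≤ (p : ℝ) := by exact_mod_cast (Fact.out : p.Prime).two_le
  have hsq : (0 : ℝ) ≤ Real.sqrt p := Real.sqrt_nonneg _
  have hSbound : ‖S‖ ≤ (((n:ℝ) - 1) * ((n:ℝ) - 2)) * Real.sqrt p := by
    calc ‖S‖ ≤ ∑ q ∈ P p n, ‖q.1 (-(a⁻¹ * c)) * q.2 (-(b⁻¹ * c)) * jacobiSum q.1 q.2‖ :=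
          norm_sum_le _ _
      _ ≤ ∑ _q ∈ P p n, Real.sqrt p := by
          refine Finset.sum_le_sum fun q hq => ?_
          obtain ⟨⟨⟨hq1, _⟩, hq2, _⟩, hq12⟩ := mem_P.mp hq
          rw [norm_mul, norm_mul, norm_jacobiSum hq1 hq2 hq12]
          have h1 := norm_apply_le q.1 (-(a⁻¹ * c))
          have h2 := norm_apply_le q.2 (-(b⁻¹ * c))
          have h3 : ‖q.1 (-(a⁻¹ * c))‖ * ‖q.2 (-(b⁻¹ * c))‖ ≤ 1 := by
            nlinarith [norm_nonneg (q.1 (-(a⁻¹ * c))), norm_nonneg (q.2 (-(b⁻¹ * c)))]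
          have h4 := mul_le_mul_of_nonneg_right h3 hsq
          simpa using h4
      _ = ((P p n).card : ℝ) * Real.sqrt p := by rw [Finset.sum_const, nsmul_eq_mul]
      _ ≤ (((n:ℝ) - 1) * ((n:ℝ) - 2)) * Real.sqrt p := by
          refine mul_le_mul_of_nonneg_right ?_ hsq
          calc ((P p n).card : ℝ) ≤ (((n - 1) * (n - 2) : ℕ) : ℝ) := by
                exact_mod_cast card_P_le hn
            _ = ((n:ℝ) - 1) * ((n:ℝ) - 2) := by
                have h1 : (1:ℕ) ≤ n := by omega
                rw [Nat.cast_mul, Nat.cast_sub h1, Nat.cast_sub hn]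
                push_cast
                ring
  have habs : |(Nz : ℝ) - (p : ℝ) ^ 2| ≤ ((p : ℝ) - 1) * ((((n:ℝ) - 1) * ((n:ℝ) - 2)) * Real.sqrt p) := by
    have h1 : ((Nz : ℝ) - (p : ℝ) ^ 2 : ℝ) = ((((p : ℂ) - 1) * S).re) := by
      have := formula
      have h2 : ((Nz : ℂ) - (p:ℂ)^2) = ((p : ℂ) - 1) * S := by rw [this]; ring
      have h4 : ((Nz : ℂ) - (p:ℂ)^2) = (((Nz : ℝ) - (p:ℝ)^2 : ℝ) : ℂ) := by
        push_cast
        ring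
      rw [← h2, h4, Complex.ofReal_re]
    rw [h1]
    calc |(((p : ℂ) - 1) * S).re| ≤ ‖((p : ℂ) - 1) * S‖ := Complex.abs_re_le_norm _
      _ = ‖(p : ℂ) - 1‖ * ‖S‖ := norm_mul _ _
      _ ≤ ((p : ℝ) - 1) * ((((n:ℝ) - 1) * ((n:ℝ) - 2)) * Real.sqrt p) := by
          refine mul_le_mul ?_ hSbound (norm_nonneg _) (by linarith)
          have : ((p : ℂ) - 1) = (((p : ℝ) - 1 : ℝ) : ℂ) := by push_cast; ring
          rw [this, Complex.norm_real, Real.norm_eq_abs,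
            abs_of_nonneg (by linarith : (0:ℝ) ≤ (p:ℝ) - 1)]
  -- Step 3: numeric conclusion `Nz ≥ 2`
  have hA0 : (0:ℝ) ≤ ((n:ℝ) - 1) * ((n:ℝ) - 2) := by
    have : (2:ℝ) ≤ (n:ℝ) := by exact_mod_cast hn
    nlinarith
  have hNzgt : (1 : ℝ) < (Nz : ℝ) := by
    have h1 : ((p : ℝ) - 1) * ((((n:ℝ) - 1) * ((n:ℝ) - 2)) * Real.sqrt p)
        < ((p : ℝ) - 1) * ((p : ℝ) + 1) := by
      rcases eq_or_lt_of_le (mul_nonneg hA0 hsq) with h | h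
      · rw [← h]; nlinarith
      · exact mul_lt_mul_of_pos_left hHW (by linarith)
    have h2 := abs_le.mp habs
    nlinarith
  have hNz2 : 2 ≤ Nz := by
    have h1 : 1 < Nz := by exact_mod_cast hNzgt
    omega
  by_contra hcon
  push_neg at hcon
  have hzempty : ∀ z : ZMod p, z ≠ 0 → (Finset.univ.filter
      (fun q : ZMod p × ZMod p => a * q.1 ^ n + b * q.2 ^ n = -(c * z ^ n))) = ∅ := by
    intro z hz0
    rw [Finset.eq_empty_iff_forall_notMem]
    rintro ⟨x, y⟩ hxy
    rw [Finset.mem_filter] at hxy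
    refine hcon x y z (fun _ _ => hz0) ?_
    linear_combination hxy.2
  have h0card : (Finset.univ.filter
      (fun q : ZMod p × ZMod p => a * q.1 ^ n + b * q.2 ^ n = -(c * (0:ZMod p) ^ n))).card
        ≤ 1 := by
    have hmem : ∀ q ∈ Finset.univ.filter
        (fun q : ZMod p × ZMod p => a * q.1 ^ n + b * q.2 ^ n = -(c * (0:ZMod p) ^ n)),
        q = ((0 : ZMod p), (0 : ZMod p)) := by
      rintro ⟨x, y⟩ hq
      rw [Finset.mem_filter] at hq
      have heq : a * x ^ n + b * y ^ n + c * (0:ZMod p) ^ n = 0 := by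
        linear_combination hq.2
      by_contra hne
      refine hcon x y 0 (fun hx hy => fun _ => hne ?_) heq
      rw [hx, hy]
    rw [Finset.card_le_one]
    intro q hq q' hq'
    rw [hmem q hq, hmem q' hq']
  have hle : Nz ≤ 1 := by
    rw [hNz, ← Finset.add_sum_erase Finset.univ _ (Finset.mem_univ (0 : ZMod p))]
    have hrest : ∑ z ∈ Finset.univ.erase (0 : ZMod p),
        (Finset.univ.filter
          (fun q : ZMod p × ZMod p => a * q.1 ^ n + b * q.2 ^ n = -(c * z ^ n))).card = 0 :=
      Finset.sum_eq_zero fun z hz' => by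
        rw [hzempty z (Finset.mem_erase.mp hz').1, Finset.card_empty]
    rw [hrest]
    omega
  omega
variable {p : ℕ} [Fact p.Prime]

lemma toZMod_eq_zero_iff {x : ℤ_[p]} : PadicInt.toZMod x = 0 ↔ (p : ℤ_[p]) ∣ x := by
  rw [← RingHom.mem_ker, PadicInt.ker_toZMod, PadicInt.maximalIdeal_eq_span_p,
    Ideal.mem_span_singleton]

lemma toZMod_lift (w : ZMod p) : PadicInt.toZMod ((w.val : ℕ) : ℤ_[p]) = w := by
  rw [map_natCast, ZMod.natCast_val, ZMod.cast_id]

lemma norm_natCast_eq_one {n : ℕ} (hpn : ¬ p ∣ n) : ‖(n : ℤ_[p])‖ = 1 := by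
  rw [← PadicInt.isUnit_iff]
  by_contra h
  rw [PadicInt.not_isUnit_iff, PadicInt.norm_lt_one_iff_dvd] at h
  rw [← toZMod_eq_zero_iff, map_natCast, ZMod.natCast_eq_zero_iff] at h
  exact hpn h

lemma hensel_lift {n : ℕ} (hn : n ≠ 0) (hpn : ¬ p ∣ n) (s C : ℤ_[p]) (hC : IsUnit C)
    {z0 : ZMod p} (hz : z0 ≠ 0)
    (heq : PadicInt.toZMod s + PadicInt.toZMod C * z0 ^ n = 0) :
    ∃ z : ℤ_[p], ‖z‖ = 1 ∧ s + C * z ^ n = 0 := by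
  classical
  set t₀ : ℤ_[p] := ((z0.val : ℕ) : ℤ_[p]) with ht₀
  have htz : PadicInt.toZMod t₀ = z0 := toZMod_lift z0
  have ht0norm : ‖t₀‖ = 1 := by
    rw [← PadicInt.isUnit_iff]
    by_contra h
    rw [PadicInt.not_isUnit_iff, PadicInt.norm_lt_one_iff_dvd, ← toZMod_eq_zero_iff,
      htz] at h
    exact hz h
  set F : Polynomial ℤ_[p] :=
    Polynomial.C C * Polynomial.X ^ n + Polynomial.C s with hF
  have hFeval : ∀ x : ℤ_[p], F.eval x = C * x ^ n + s := by
    intro x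
    simp [hF]
  have hFderiv : ∀ x : ℤ_[p], F.derivative.eval x = C * ((n : ℤ_[p]) * x ^ (n - 1)) := by
    intro x
    rw [hF]
    simp [Polynomial.derivative_C_mul, Polynomial.derivative_X_pow]
    try ring
  have hder : ‖F.derivative.eval t₀‖ = 1 := by
    rw [hFderiv, norm_mul, norm_mul, norm_pow,
      PadicInt.isUnit_iff.mp hC, norm_natCast_eq_one hpn, ht0norm, one_pow]
    norm_num
  have heval : ‖F.eval t₀‖ < 1 := by
    rw [hFeval t₀, PadicInt.norm_lt_one_iff_dvd, ← toZMod_eq_zero_iff]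
    rw [map_add, map_mul, map_pow, htz]
    linear_combination heq
  obtain ⟨z, hz1, hz2, _, _⟩ := hensels_lemma (F := F) (a := t₀) (by
    rw [Polynomial.coe_aeval_eq_eval, hder, one_pow]; exact heval)
  refine ⟨z, ?_, ?_⟩
  · have hlt : ‖z - t₀‖ < 1 := by rwa [Polynomial.coe_aeval_eq_eval, hder] at hz2
    have hne : ‖t₀‖ ≠ ‖z - t₀‖ := by
      rw [ht0norm]
      exact fun h => absurd hlt (by rw [← h]; norm_num)
    calc ‖z‖ = ‖t₀ + (z - t₀)‖ := by congr 1; ring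
      _ = max ‖t₀‖ ‖z - t₀‖ := PadicInt.norm_add_eq_max_of_ne hne
      _ = 1 := by rw [ht0norm]; exact max_eq_left hlt.le
  · rw [Polynomial.coe_aeval_eq_eval, hFeval] at hz1
    linear_combination hz1
lemma lift_three {n : ℕ} (hn : n ≠ 0) (hpn : ¬ p ∣ n) (A B C : ℤ_[p]) (hC : IsUnit C)
    (x y : ZMod p) {z : ZMod p} (hz : z ≠ 0)
    (heq : PadicInt.toZMod A * x ^ n + PadicInt.toZMod B * y ^ n
      + PadicInt.toZMod C * z ^ n = 0) :
    ∃ X Y Z : ℤ_[p], ¬ (p : ℤ_[p]) ∣ Z ∧ A * X ^ n + B * Y ^ n + C * Z ^ n = 0 := by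
  set X : ℤ_[p] := ((x.val : ℕ) : ℤ_[p]) with hX
  set Y : ℤ_[p] := ((y.val : ℕ) : ℤ_[p]) with hY
  have heq' : PadicInt.toZMod (A * X ^ n + B * Y ^ n) + PadicInt.toZMod C * z ^ n = 0 := by
    rw [map_add, map_mul, map_mul, map_pow, map_pow, hX, hY, toZMod_lift, toZMod_lift]
    linear_combination heq
  obtain ⟨Z, hZ1, hZ2⟩ := hensel_lift hn hpn (A * X ^ n + B * Y ^ n) C hC hz heq'
  refine ⟨X, Y, Z, ?_, by linear_combination hZ2⟩
  intro hdvd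
  rw [← PadicInt.norm_lt_one_iff_dvd, hZ1] at hdvd
  norm_num at hdvd

end FermatPadic

/-- Let `n ≥ 2` and `p` a prime with `p ∤ n` and `(p+1)/√p > (n-1)(n-2)`. Then for unit
coefficients `a₁, a₂, a₃ ∈ ℤ_p^×` the Fermat equation `a₁t₁ⁿ + a₂t₂ⁿ + a₃t₃ⁿ = 0` has a
primitive `ℤ_p`-solution, i.e. a solution in `ℤ_p³ \ pℤ_p³`. -/
theorem stmt_4 (n : ℕ) (hn : 2 ≤ n) (p : ℕ) [Fact p.Prime] (hpn : ¬ p ∣ n)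
    (hHW : ((p : ℝ) + 1) / Real.sqrt p > ((n : ℝ) - 1) * ((n : ℝ) - 2))
    (a₁ a₂ a₃ : ℤ_[p]) (h₁ : IsUnit a₁) (h₂ : IsUnit a₂) (h₃ : IsUnit a₃) :
    ∃ t₁ t₂ t₃ : ℤ_[p],
      ¬((p : ℤ_[p]) ∣ t₁ ∧ (p : ℤ_[p]) ∣ t₂ ∧ (p : ℤ_[p]) ∣ t₃) ∧
      a₁ * t₁ ^ n + a₂ * t₂ ^ n + a₃ * t₃ ^ n = 0 := by
  have hn0 : n ≠ 0 := by omega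
  have hp0 : (0 : ℝ) < p := by
    exact_mod_cast (Fact.out : p.Prime).pos
  have hsq : 0 < Real.sqrt p := Real.sqrt_pos.mpr hp0
  have hHW' : (((n:ℝ) - 1) * ((n:ℝ) - 2)) * Real.sqrt p < (p : ℝ) + 1 := by
    have h := (lt_div_iff₀ hsq).mp hHW
    linarith
  have hA : PadicInt.toZMod a₁ ≠ 0 := (h₁.map PadicInt.toZMod).ne_zero
  have hB : PadicInt.toZMod a₂ ≠ 0 := (h₂.map PadicInt.toZMod).ne_zero
  have hC : PadicInt.toZMod a₃ ≠ 0 := (h₃.map PadicInt.toZMod).ne_zero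
  obtain ⟨x, y, z, hnt, heq⟩ := FermatPadic.ff_exists hn hHW' hA hB hC
  have hcase : x ≠ 0 ∨ y ≠ 0 ∨ z ≠ 0 := by
    by_contra h
    push_neg at h
    exact hnt h
  rcases hcase with hx | hy | hz
  · obtain ⟨X, Y, Z, hZ, hEq⟩ := FermatPadic.lift_three hn0 hpn a₂ a₃ a₁ h₁ y z hx
      (by linear_combination heq)
    exact ⟨Z, X, Y, fun h => hZ h.1, by linear_combination hEq⟩
  · obtain ⟨X, Y, Z, hZ, hEq⟩ := FermatPadic.lift_three hn0 hpn a₁ a₃ a₂ h₂ x z hy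
      (by linear_combination heq)
    exact ⟨X, Z, Y, fun h => hZ h.2.1, by linear_combination hEq⟩
  · obtain ⟨X, Y, Z, hZ, hEq⟩ := FermatPadic.lift_three hn0 hpn a₁ a₂ a₃ h₃ x y hz
      (by linear_combination heq)
    exact ⟨X, Y, Z, fun h => hZ h.2.2, by linear_combination hEq⟩
end

section
/- Let $p$ be a prime, $n \geq 2$ with $p \nmid n$, and suppose $a_1, a_2, a_3 \in \mathbb{Z}_p$ with $0 < v_p(a_1) < n$ and $a_2, a_3 \in \mathbb{Z}_p^\times$. Then the equation $a_1 t_1^n + a_2 t_2^n + a_3 t_3^n = 0$ has a primitive solution modulo $p^n$ (i.e. a solution in $(\mathbb{Z}/p^n\mathbb{Z})^3$ with not all coordinates divisible by $p$ and $(t_1,t_2,t_3) \not\equiv (0,0,c)$ for $c$ a unit) if and only if $-a_2/a_3$ is an $n$-th power in $\mathbb{F}_p^\times$. -/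
section aux

variable {p : ℕ} [Fact p.Prime]

lemma castHom_toZModPow (n : ℕ) (hn0 : n ≠ 0) (hd : p ∣ p ^ n) (x : ℤ_[p]) :
    ZMod.castHom hd (ZMod p) (PadicInt.toZModPow n x) = PadicInt.toZMod x := by
  have hspec := PadicInt.toZMod_spec x
  rw [PadicInt.maximalIdeal_eq_span_p, Ideal.mem_span_singleton] at hspec
  obtain ⟨c, hc⟩ := hspec
  have hx : x = (ZMod.cast (PadicInt.toZMod x) : ℤ_[p]) + p * c := by
    rw [← hc]; ring
  have hcast : (ZMod.cast (PadicInt.toZMod x) : ℤ_[p]) =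
      (((PadicInt.toZMod x).val : ℕ) : ℤ_[p]) := by
    exact (ZMod.natCast_val _).symm
  rw [hx, hcast, map_add, map_mul, map_natCast (PadicInt.toZModPow n),
    map_natCast (PadicInt.toZModPow n), map_add, map_mul,
    map_natCast (ZMod.castHom hd (ZMod p)), map_natCast (ZMod.castHom hd (ZMod p)),
    ZMod.natCast_self, zero_mul, add_zero, ZMod.natCast_zmod_val,
    map_add, map_mul, map_natCast PadicInt.toZMod, map_natCast PadicInt.toZMod,
    ZMod.natCast_self, zero_mul, add_zero, ZMod.natCast_zmod_val]

lemma toZMod_eq_zero_of_val_pos {x : ℤ_[p]} (h : 0 < x.valuation) :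
    PadicInt.toZMod x = 0 := by
  rcases eq_or_ne x 0 with rfl | hx
  · simp
  · have : ‖x‖ < 1 := by
      rw [PadicInt.norm_eq_zpow_neg_valuation hx]
      have hp : (1 : ℝ) < p := by exact_mod_cast (Fact.out : p.Prime).one_lt
      calc (p : ℝ) ^ (-(x.valuation : ℤ)) < (p:ℝ) ^ (0:ℤ) := by
            apply zpow_lt_zpow_right₀ hp; omega
        _ = 1 := by norm_num
    rw [PadicInt.norm_lt_one_iff_dvd] at this
    rw [← RingHom.mem_ker, PadicInt.ker_toZMod, PadicInt.maximalIdeal_eq_span_p,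
      Ideal.mem_span_singleton]
    exact this

lemma toZMod_eq_zero_iff_norm_lt_one (x : ℤ_[p]) : PadicInt.toZMod x = 0 ↔ ‖x‖ < 1 := by
  rw [← RingHom.mem_ker, PadicInt.ker_toZMod, PadicInt.maximalIdeal_eq_span_p,
    Ideal.mem_span_singleton, ← PadicInt.norm_lt_one_iff_dvd]

end aux

/-- Let `p ∤ n` be prime, `a₁ ∈ ℤ_p` with `0 < v_p(a₁) < n`, and `a₂, a₃ ∈ ℤ_p^×`. Then
`a₁t₁ⁿ + a₂t₂ⁿ + a₃t₃ⁿ = 0` has a primitive solution modulo `pⁿ` (not all coordinates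
divisible by `p`, and not of the shape `(0, 0, unit) mod p`) iff `-a₂/a₃` is an `n`-th
power in `𝔽_p^×`. -/
theorem stmt_17 (n : ℕ) (hn : 2 ≤ n) (p : ℕ) [Fact p.Prime] (hpn : ¬ p ∣ n)
    (a₁ a₂ a₃ : ℤ_[p]) (hv₁ : 0 < a₁.valuation) (hv₁' : a₁.valuation < n)
    (h₂ : IsUnit a₂) (h₃ : IsUnit a₃) :
    (∃ t₁ t₂ t₃ : ZMod (p ^ n),
      ¬(ZMod.castHom (dvd_pow_self p (by omega : n ≠ 0)) (ZMod p) t₁ = 0 ∧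
        ZMod.castHom (dvd_pow_self p (by omega : n ≠ 0)) (ZMod p) t₂ = 0 ∧
        ZMod.castHom (dvd_pow_self p (by omega : n ≠ 0)) (ZMod p) t₃ = 0) ∧
      ¬(ZMod.castHom (dvd_pow_self p (by omega : n ≠ 0)) (ZMod p) t₁ = 0 ∧
        ZMod.castHom (dvd_pow_self p (by omega : n ≠ 0)) (ZMod p) t₂ = 0 ∧
        IsUnit (ZMod.castHom (dvd_pow_self p (by omega : n ≠ 0)) (ZMod p) t₃)) ∧
      (PadicInt.toZModPow n a₁) * t₁ ^ n + (PadicInt.toZModPow n a₂) * t₂ ^ n +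
        (PadicInt.toZModPow n a₃) * t₃ ^ n = 0) ↔
    (∃ t : ZMod p, t ≠ 0 ∧
      t ^ n = -(PadicInt.toZMod a₂) / (PadicInt.toZMod a₃)) := by
  have hn0 : n ≠ 0 := by omega
  have hp := (Fact.out : p.Prime)
  set f : ZMod (p ^ n) →+* ZMod p := ZMod.castHom (dvd_pow_self p hn0) (ZMod p) with hf
  have hb₁ : PadicInt.toZMod a₁ = 0 := toZMod_eq_zero_of_val_pos hv₁
  have hb₂ : PadicInt.toZMod a₂ ≠ 0 := (h₂.map PadicInt.toZMod).ne_zero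
  have hb₃ : PadicInt.toZMod a₃ ≠ 0 := (h₃.map PadicInt.toZMod).ne_zero
  have hA₁ : PadicInt.toZModPow n a₁ ≠ 0 := by
    intro h
    have ha₁0 : a₁ ≠ 0 := by
      intro h0; rw [h0, PadicInt.valuation_zero] at hv₁; exact lt_irrefl _ hv₁
    have := (PadicInt.mem_span_pow_iff_le_valuation a₁ ha₁0 n).mp
      (by rw [← PadicInt.ker_toZModPow]; exact h)
    omega
  constructor
  · rintro ⟨t₁, t₂, t₃, h1, h2, heq⟩
    have h1' : ¬(f t₁ = 0 ∧ f t₂ = 0 ∧ f t₃ = 0) := h1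
    have h2' : ¬(f t₁ = 0 ∧ f t₂ = 0 ∧ IsUnit (f t₃)) := h2
    have heqp : PadicInt.toZMod a₂ * (f t₂) ^ n + PadicInt.toZMod a₃ * (f t₃) ^ n = 0 := by
      have := congrArg f heq
      simp only [map_add, map_mul, map_pow, map_zero, hf,
        castHom_toZModPow n hn0 _ a₁, castHom_toZModPow n hn0 _ a₂,
        castHom_toZModPow n hn0 _ a₃] at this
      rw [hb₁, zero_mul, zero_add] at this
      exact this
    by_cases ht₂ : f t₂ = 0
    · -- contradiction case
      exfalso
      have ht₃ : f t₃ = 0 := by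
        rw [ht₂, zero_pow hn0, mul_zero, zero_add] at heqp
        rcases mul_eq_zero.mp heqp with h | h
        · exact absurd h hb₃
        · exact pow_eq_zero_iff hn0 |>.mp h
      have ht₁ : f t₁ ≠ 0 := by
        intro h
        exact h2' ⟨h, ht₂, ht₃ ▸ IsUnit.of_mul_eq_one (a := (0 : ZMod p)) 0 (by
          exact absurd ⟨h, ht₂, ht₃⟩ h1')⟩
      -- t₂, t₃ are divisible by p, so t₂^n = t₃^n = 0 in ZMod (p^n)
      have key : ∀ t : ZMod (p ^ n), f t = 0 → t ^ n = 0 := by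
        intro t ht
        have hval : (t.val : ZMod p) = 0 := by
          have : f ((t.val : ℕ) : ZMod (p ^ n)) = 0 := by
            rw [ZMod.natCast_zmod_val]; exact ht
          rwa [map_natCast] at this
        obtain ⟨k, hk⟩ := (ZMod.natCast_eq_zero_iff _ _).mp hval
        have : t = ((p * k : ℕ) : ZMod (p ^ n)) := by rw [← hk, ZMod.natCast_zmod_val]
        rw [this]
        push_cast
        rw [mul_pow, ← Nat.cast_pow, ZMod.natCast_self, zero_mul]
      have ht₂n : t₂ ^ n = 0 := key t₂ ht₂
      have ht₃n : t₃ ^ n = 0 := key t₃ ht₃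
      rw [ht₂n, ht₃n, mul_zero, mul_zero, add_zero, add_zero] at heq
      -- t₁ is a unit in ZMod (p^n)
      have hu : IsUnit t₁ := by
        have hvd : ¬ p ∣ t₁.val := by
          intro hd
          apply ht₁
          have : ((t₁.val : ℕ) : ZMod p) = 0 := (ZMod.natCast_eq_zero_iff _ _).mpr hd
          have h2 : f ((t₁.val : ℕ) : ZMod (p ^ n)) = 0 := by rw [map_natCast]; exact this
          rwa [ZMod.natCast_zmod_val] at h2
        have : IsUnit ((t₁.val : ℕ) : ZMod (p ^ n)) := by
          rw [ZMod.isUnit_iff_coprime]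
          exact Nat.Coprime.pow_right _ ((Nat.Prime.coprime_iff_not_dvd hp).mpr hvd).symm
        rwa [ZMod.natCast_zmod_val] at this
      exact hA₁ (((hu.pow n).mul_left_eq_zero).mp heq)
    · -- f t₂ ≠ 0
      have ht₃ : f t₃ ≠ 0 := by
        intro h
        rw [h, zero_pow hn0, mul_zero, add_zero] at heqp
        rcases mul_eq_zero.mp heqp with h' | h'
        · exact hb₂ h'
        · exact ht₂ (pow_eq_zero_iff hn0 |>.mp h')
      refine ⟨f t₃ / f t₂, div_ne_zero ht₃ ht₂, ?_⟩
      rw [div_pow, div_eq_div_iff (pow_ne_zero _ ht₂) hb₃]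
      linear_combination heqp
  · rintro ⟨t, ht, hteq⟩
    have hmodp : PadicInt.toZMod a₂ + PadicInt.toZMod a₃ * t ^ n = 0 := by
      field_simp at hteq
      linear_combination hteq
    set a : ℤ_[p] := ((t.val : ℕ) : ℤ_[p]) with ha
    have hta : PadicInt.toZMod a = t := by rw [ha, map_natCast, ZMod.natCast_zmod_val]
    have hunita : IsUnit a := by
      rw [PadicInt.isUnit_iff]
      rcases lt_or_eq_of_le (PadicInt.norm_le_one a) with h | h
      · exact absurd (hta ▸ (toZMod_eq_zero_iff_norm_lt_one a).mpr h) ht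
      · exact h
    have hunitn : IsUnit ((n : ℕ) : ℤ_[p]) := by
      rw [PadicInt.isUnit_iff]
      rcases lt_or_eq_of_le (PadicInt.norm_le_one ((n : ℕ) : ℤ_[p])) with h | h
      · exfalso
        apply hpn
        have : ‖(((n : ℤ)) : ℤ_[p])‖ < 1 := by push_cast; exact_mod_cast h
        have := (PadicInt.norm_int_lt_one_iff_dvd (n : ℤ)).mp this
        exact_mod_cast this
      · exact h
    set F : Polynomial ℤ_[p] :=
      Polynomial.C a₂ + Polynomial.C a₃ * Polynomial.X ^ n with hF
    have hFeval : ∀ z : ℤ_[p], F.eval z = a₂ + a₃ * z ^ n := by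
      intro z; simp [hF]
    have hFder : F.derivative.eval a = a₃ * (((n : ℕ) : ℤ_[p]) * a ^ (n - 1)) := by
      rw [hF, Polynomial.derivative_add, Polynomial.derivative_C,
        Polynomial.derivative_C_mul, Polynomial.derivative_X_pow, zero_add]
      simp
    have hderu : IsUnit (F.derivative.eval a) := by
      rw [hFder]
      exact h₃.mul (hunitn.mul (hunita.pow _))
    have hnorm : ‖F.eval a‖ < ‖F.derivative.eval a‖ ^ 2 := by
      rw [PadicInt.isUnit_iff.mp hderu, one_pow, ← toZMod_eq_zero_iff_norm_lt_one]
      rw [hFeval, map_add, map_mul, map_pow, hta]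
      exact hmodp
    obtain ⟨z, hz, -⟩ := hensels_lemma hnorm
    rw [Polynomial.coe_aeval_eq_eval, hFeval] at hz
    refine ⟨0, 1, PadicInt.toZModPow n z, ?_, ?_, ?_⟩
    · rintro ⟨-, h2', -⟩
      rw [map_one] at h2'
      exact one_ne_zero h2'
    · rintro ⟨-, h2', -⟩
      rw [map_one] at h2'
      exact one_ne_zero h2'
    · rw [zero_pow hn0, mul_zero, zero_add, one_pow, mul_one, ← map_pow, ← map_mul,
        ← map_add, show a₂ + a₃ * z ^ n = 0 from hz, map_zero]
end
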